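/- arXiv:2112.03016 — 8 statements merged into one kernel-verified Lean document; each statement's English description precedes it below -/
import Mathlib

section
/- For every integer n ≥ 1 and real θ, the n-fold iterated integral ∫₁^θ ∫₁^{θx₁} ⋯ ∫₁^{θx_{n-1}} dx₁⋯dx_n equals (θ-1)^n J_{n+1}(θ)/n!, where J_n are the Mallows–Riordan polynomials. -/
/-!
Let `F(z) = ∑ θ^(n choose 2) zⁿ / n!`, so that `F'(z) = F(θz)`. Since
`∂ₓ [zⁿ⁺¹] F(xz)/F(z) = [zⁿ] F'(xz)/F(z)`, `F(θtz) = F'(tz)` and `F(z)/F(z) = 1`, induction on `n`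
shows that the iterated integral with outer limit `θt` is `[zⁿ] F'(tz)/F(z)`. At `t = 1` this is the
logarithmic derivative `C = F'/F`; differentiating `C F = F'` and using `F'' = θ F'(θz)` gives
`C' = (θ C(θz) - C) C`, i.e. `(n+1) cₙ₊₁ = ∑_{i+j=n} (θ^(i+1) - 1) cᵢ cⱼ` with `c₀ = 1`. Multiplying
the Kreweras recursion by `(θ - 1)^(n+1) / (n+1)!` and using `(1 + θ + ⋯ + θⁱ)(θ - 1) = θ^(i+1) - 1`
shows that `(θ - 1)ⁿ Jₙ₊₁(θ) / n!` satisfies the same recursion.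
-/

open Polynomial MeasureTheory

/-- Mallows–Riordan polynomials `J n`, via the Kreweras recursion
`J (n+2) = ∑_{i=0}^n C(n,i) (1+θ+⋯+θ^i) J (i+1) J (n+1-i)`, `J 1 = 1`. -/
noncomputable def MRJ : ℕ → Polynomial ℚ
  | 0 => 0
  | 1 => 1
  | n + 2 =>
      ∑ i ∈ (Finset.range (n + 1)).attach,
        (n.choose i.1 : Polynomial ℚ) * (∑ j ∈ Finset.range (i.1 + 1), X ^ j) *
          MRJ (i.1 + 1) * MRJ (n + 1 - i.1)
  decreasing_by
  · have := Finset.mem_range.mp i.2; omega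
  · omega

/-- The iterated integral `∫₁^{θ t} ∫₁^{θ x₁} ⋯ ∫₁^{θ x_{n-1}} dx₁ ⋯ dx_n`
(as a function of the outer upper-limit parameter `t`). -/
noncomputable def iterInt (θ : ℝ) : ℕ → ℝ → ℝ
  | 0, _ => 1
  | n + 1, t => ∫ x in (1 : ℝ)..(θ * t), iterInt θ n x

open Finset

theorem MRJ_add_two (n : ℕ) : MRJ (n + 2) = ∑ i ∈ range (n + 1),
    (n.choose i : ℚ[X]) * (∑ j ∈ range (i + 1), X ^ j) * MRJ (i + 1) * MRJ (n + 1 - i) := by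
  rw [MRJ]
  exact sum_attach (range (n + 1)) fun i =>
    (n.choose i : ℚ[X]) * (∑ j ∈ range (i + 1), X ^ j) * MRJ (i + 1) * MRJ (n + 1 - i)

section Recursion

variable {K : Type*} [Field K]

def SatisfiesMallowsRiordanRec (θ : K) (u : ℕ → K) : Prop :=
  u 0 = 1 ∧ ∀ n : ℕ, (n + 1) * u (n + 1) =
    ∑ p ∈ antidiagonal n, (θ ^ (p.1 + 1) - 1) * u p.1 * u p.2

theorem SatisfiesMallowsRiordanRec.unique [CharZero K] {θ : K} {u v : ℕ → K}
    (hu : SatisfiesMallowsRiordanRec θ u) (hv : SatisfiesMallowsRiordanRec θ v) : u = v := by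
  funext n
  induction n using Nat.strong_induction_on with
  | _ n ih =>
    rcases n with _ | n
    · rw [hu.1, hv.1]
    · refine mul_left_cancel₀ n.cast_add_one_ne_zero ?_
      rw [hu.2, hv.2]
      refine sum_congr rfl fun p hp => ?_
      rw [ih p.1 (Nat.lt_succ_of_le (HasAntidiagonal.antidiagonal.fst_le hp)),
        ih p.2 (Nat.lt_succ_of_le (HasAntidiagonal.antidiagonal.snd_le hp))]

theorem satisfiesMallowsRiordanRec_MRJ [CharZero K] (θ : K) :
    SatisfiesMallowsRiordanRec θ fun n => (θ - 1) ^ n * aeval θ (MRJ (n + 1)) / n.factorial := by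
  refine ⟨by simp [MRJ], fun n => ?_⟩
  rw [Nat.sum_antidiagonal_eq_sum_range_succ (fun i j => (θ ^ (i + 1) - 1) *
    ((θ - 1) ^ i * aeval θ (MRJ (i + 1)) / i.factorial) *
    ((θ - 1) ^ j * aeval θ (MRJ (j + 1)) / j.factorial))]
  dsimp only
  rw [MRJ_add_two, map_sum, mul_sum, sum_div, mul_sum]
  refine sum_congr rfl fun i hi => ?_
  obtain ⟨j, rfl⟩ := Nat.exists_eq_add_of_le (Nat.lt_succ_iff.mp (mem_range.mp hi))
  have hgeom : (∑ k ∈ range (i + 1), θ ^ k) * (θ - 1) = θ ^ (i + 1) - 1 := geom_sum_mul θ (i + 1)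
  rw [Nat.add_sub_cancel_left, show i + j + 1 - i = j + 1 by omega, ← hgeom]
  simp only [map_mul, map_natCast, map_sum, map_pow, aeval_X]
  rw [Nat.cast_choose K (Nat.le_add_right i j), Nat.add_sub_cancel_left, Nat.factorial_succ]
  push_cast
  have hij : (i : K) + j + 1 ≠ 0 := by exact_mod_cast (i + j).succ_ne_zero
  have hf : ((i + j).factorial : K) ≠ 0 := by exact_mod_cast (i + j).factorial_ne_zero
  field_simp
  ring

end Recursion

open PowerSeries

namespace PowerSeries

theorem derivative_rescale {R : Type*} [CommSemiring R] (a : R) (f : R⟦X⟧) :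
    d⁄dX R (rescale a f) = a • rescale a (d⁄dX R f) := by
  ext n
  simp only [coeff_derivative, coeff_rescale, coeff_smul, smul_eq_mul]
  ring

theorem derivative_eq_of_mul_eq_derivative {R : Type*} [CommRing R] [IsDomain R] {θ : R}
    {C F : R⟦X⟧} (hF : d⁄dX R F = rescale θ F) (hF0 : F ≠ 0) (hCF : C * F = d⁄dX R F) :
    d⁄dX R C = (θ • rescale θ C - C) * C := by
  have hF' : d⁄dX R (d⁄dX R F) = θ • rescale θ C * C * F := by
    rw [hF, derivative_rescale, ← hCF, map_mul, ← hF, ← hCF, smul_mul_assoc, smul_mul_assoc,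
      mul_assoc]
  refine mul_right_cancel₀ hF0 ?_
  have := congrArg (d⁄dX R) hCF
  rw [Derivation.leibniz, hF', smul_eq_mul, smul_eq_mul, ← hCF] at this
  linear_combination this

section Field

variable {K : Type*} [Field K] {θ : K} {F : K⟦X⟧}

theorem coeff_zero_rescale_derivative_mul_inv (hF : d⁄dX K F = rescale θ F)
    (hF0 : constantCoeff F ≠ 0) (t : K) : coeff 0 (rescale t (d⁄dX K F) * F⁻¹) = 1 := by
  rw [coeff_zero_eq_constantCoeff_apply, map_mul, constantCoeff_inv,
    ← coeff_zero_eq_constantCoeff_apply]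
  simp only [coeff_rescale, hF, pow_zero, one_mul, coeff_zero_eq_constantCoeff_apply,
    mul_inv_cancel₀ hF0]

theorem satisfiesMallowsRiordanRec_coeff_derivative_mul_inv (hF : d⁄dX K F = rescale θ F)
    (hF0 : constantCoeff F ≠ 0) :
    SatisfiesMallowsRiordanRec θ fun n => coeff n (d⁄dX K F * F⁻¹) := by
  have hCF : d⁄dX K F * F⁻¹ * F = d⁄dX K F := by
    rw [mul_assoc, PowerSeries.inv_mul_cancel F hF0, mul_one]
  have hODE := derivative_eq_of_mul_eq_derivative hF
    (ne_of_apply_ne constantCoeff (by simpa using hF0)) hCF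
  refine ⟨by simpa using coeff_zero_rescale_derivative_mul_inv hF hF0 1, fun n => ?_⟩
  rw [mul_comm, ← coeff_derivative, hODE, coeff_mul]
  refine sum_congr rfl fun p _ => ?_
  simp only [map_sub, coeff_smul, coeff_rescale, smul_eq_mul]
  ring

end Field

noncomputable def deformedExp {K : Type*} [Field K] (θ : K) : K⟦X⟧ :=
  mk fun n => θ ^ n.choose 2 / n.factorial

theorem derivative_deformedExp {K : Type*} [Field K] [CharZero K] (θ : K) :
    d⁄dX K (deformedExp θ) = rescale θ (deformedExp θ) := by
  ext n
  simp only [deformedExp, coeff_derivative, coeff_rescale, coeff_mk, Nat.choose_succ_succ',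
    Nat.choose_one_right, pow_add, Nat.factorial_succ]
  push_cast
  field_simp

theorem continuous_coeff_rescale_mul (P Q : ℝ⟦X⟧) (n : ℕ) :
    Continuous fun x : ℝ => coeff n (rescale x P * Q) := by
  simp only [coeff_mul, coeff_rescale]
  fun_prop

theorem hasDerivAt_coeff_succ_rescale_mul (P Q : ℝ⟦X⟧) (n : ℕ) (x : ℝ) :
    HasDerivAt (fun y : ℝ => coeff (n + 1) (rescale y P * Q))
      (coeff n (rescale x (d⁄dX ℝ P) * Q)) x := by
  simp only [coeff_mul, coeff_rescale, Nat.sum_antidiagonal_succ, coeff_derivative, pow_zero,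
    one_mul]
  refine HasDerivAt.const_add _ ?_
  convert HasDerivAt.fun_sum fun (p : ℕ × ℕ) _ =>
    ((hasDerivAt_pow (p.1 + 1) x).mul_const (coeff (p.1 + 1) P)).mul_const (coeff p.2 Q) using 1
  refine sum_congr rfl fun p _ => ?_
  push_cast
  ring

theorem integral_coeff_rescale_derivative_mul (P Q : ℝ⟦X⟧) (n : ℕ) (a b : ℝ) :
    ∫ x in a..b, coeff n (rescale x (d⁄dX ℝ P) * Q) =
      coeff (n + 1) (rescale b P * Q) - coeff (n + 1) (rescale a P * Q) :=
  intervalIntegral.integral_eq_sub_of_hasDerivAt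
    (fun x _ => hasDerivAt_coeff_succ_rescale_mul P Q n x)
    ((continuous_coeff_rescale_mul _ Q n).intervalIntegrable a b)

end PowerSeries

theorem iterInt_eq_coeff {θ : ℝ} {F : ℝ⟦X⟧} (hF : d⁄dX ℝ F = rescale θ F)
    (hF0 : PowerSeries.constantCoeff F ≠ 0) (n : ℕ) (t : ℝ) :
    iterInt θ n t = PowerSeries.coeff n (rescale t (d⁄dX ℝ F) * F⁻¹) := by
  induction n generalizing t with
  | zero => exact (coeff_zero_rescale_derivative_mul_inv hF hF0 t).symm
  | succ n ih =>
    simp only [iterInt, ih, integral_coeff_rescale_derivative_mul]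
    rw [← rescale_rescale, ← hF, rescale_one, RingHom.id_apply, PowerSeries.mul_inv_cancel F hF0,
      PowerSeries.coeff_one, if_neg n.succ_ne_zero, sub_zero]

theorem iterated_integral_eq_mallowsRiordan_general (n : ℕ) (θ : ℝ) :
    iterInt θ n 1 = (θ - 1) ^ n * (Polynomial.aeval θ (MRJ (n + 1)) : ℝ) / n.factorial := by
  have hF := derivative_deformedExp θ
  have hF0 : PowerSeries.constantCoeff (deformedExp θ) ≠ 0 := by simp [deformedExp]
  rw [iterInt_eq_coeff hF hF0, rescale_one, RingHom.id_apply]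
  exact congrFun ((satisfiesMallowsRiordanRec_coeff_derivative_mul_inv hF hF0).unique
    (satisfiesMallowsRiordanRec_MRJ θ)) n

theorem iterated_integral_eq_mallowsRiordan (n : ℕ) (hn : 1 ≤ n) (θ : ℝ) :
    iterInt θ n 1 = (θ - 1) ^ n * (Polynomial.aeval θ (MRJ (n + 1)) : ℝ) / n.factorial :=
  iterated_integral_eq_mallowsRiordan_general n θ
end

section
/- For every integer n ≥ 0 and every nonzero real θ, the identity ∑_{k=0}^n binom(n,k) (θ^{k-1}-θ)^k θ^{-n(k-1)} = ∑_{k=0}^n binom(n,k) (θ^k-θ)^k θ^{-k(n-1)} holds. -/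
/-!
Expanding each power by the binomial theorem writes both sides as sums over pairs `j ≤ k ≤ n`
of `C(n,k) C(k,j) (-1)^(k-j) θ^e`. With `a = j`, `b = k - j`, `c = n - k` the coefficient
`C(n,k) C(k,j)` is the trinomial coefficient of `(a, b, c)`, and the reflection
`(k, j) ↦ (n - j, n - k)`, which swaps `a` and `c`, carries the terms of the left side
onto those of the right side.
-/

open Finset

theorem Nat.choose_sub_mul_choose_sub {n k j : ℕ} (hjk : j ≤ k) (hkn : k ≤ n) :
    n.choose (n - j) * (n - j).choose (n - k) = n.choose k * k.choose j := by
  rw [Nat.choose_symm (hjk.trans hkn), Nat.choose_mul hjk,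
    show n - k = n - j - (k - j) by omega, Nat.choose_symm (by omega)]

theorem Finset.sum_range_sum_range_reflect {M : Type*} [AddCommMonoid M] (n : ℕ)
    (G : ℕ → ℕ → M) :
    ∑ k ∈ range (n + 1), ∑ j ∈ range (k + 1), G k j =
      ∑ k ∈ range (n + 1), ∑ j ∈ range (k + 1), G (n - j) (n - k) := by
  rw [sum_sigma', sum_sigma']
  refine sum_nbij' (fun p => ⟨n - p.2, n - p.1⟩) (fun p => ⟨n - p.2, n - p.1⟩)
    ?_ ?_ ?_ ?_ ?_ <;> rintro ⟨k, j⟩ hkj <;> simp only [mem_sigma, mem_range] at hkj ⊢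
  · omega
  · omega
  all_goals rw [Nat.sub_sub_self (by omega : k ≤ n), Nat.sub_sub_self (by omega : j ≤ n)]

theorem zpow_sub_self_pow_mul_zpow {K : Type*} [Field K] {θ : K} (hθ : θ ≠ 0) (a c : ℤ)
    (k : ℕ) :
    (θ ^ a - θ) ^ k * θ ^ c =
      ∑ j ∈ range (k + 1), (-1) ^ (k - j) * (k.choose j : K) * θ ^ (a * j + (k - j : ℕ) + c) := by
  rw [sub_eq_add_neg, add_pow, sum_mul]
  refine sum_congr rfl fun j _ => ?_
  rw [neg_pow, zpow_add₀ hθ, zpow_add₀ hθ, zpow_mul, zpow_natCast, zpow_natCast]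
  ring

theorem binomial_zpow_identity (n : ℕ) (θ : ℝ) (hθ : θ ≠ 0) :
    ∑ k ∈ Finset.range (n + 1),
        (n.choose k : ℝ) * (θ ^ ((k : ℤ) - 1) - θ) ^ k * θ ^ (-(n : ℤ) * ((k : ℤ) - 1))
      = ∑ k ∈ Finset.range (n + 1),
        (n.choose k : ℝ) * (θ ^ (k : ℤ) - θ) ^ k * θ ^ (-(k : ℤ) * ((n : ℤ) - 1)) := by
  simp only [mul_assoc, zpow_sub_self_pow_mul_zpow hθ, mul_sum]
  refine (sum_range_sum_range_reflect n _).trans <|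
    sum_congr rfl fun k hk => sum_congr rfl fun j hj => ?_
  have hkn : k ≤ n := Nat.lt_succ_iff.mp (mem_range.mp hk)
  have hjk : j ≤ k := Nat.lt_succ_iff.mp (mem_range.mp hj)
  have hchoose : (n.choose (n - j) : ℝ) * (n - j).choose (n - k) = n.choose k * k.choose j := by
    exact_mod_cast Nat.choose_sub_mul_choose_sub hjk hkn
  rw [show n - j - (n - k) = k - j by omega]
  have hexp : ((n - j : ℕ) - 1 : ℤ) * (n - k : ℕ) + (k - j : ℕ) + -n * ((n - j : ℕ) - 1)
      = k * j + (k - j : ℕ) + -k * (n - 1) := by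
    push_cast [Nat.cast_sub hkn, Nat.cast_sub (hjk.trans hkn)]
    ring
  rw [hexp]
  linear_combination (-1) ^ (k - j) * θ ^ ((k : ℤ) * j + (k - j : ℕ) + -k * (n - 1)) * hchoose
end

section
/- The volume of the polytope {(x_1,…,x_n) ∈ [0,1]^n : x_1 < x_2 > x_3 < x_4 > ⋯} (alternating inequalities) equals A_n/n!, where A_n is the n-th zigzag number; equivalently, the number of alternating (up-down) permutations of {1,…,n} is A_n. -/
/-!
Both parts come down to the number `A n` of up-down permutations of `Fin n`.

An alternating permutation of `n + 1` letters, up-down or down-up, with its maximum at position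
`p` is an alternating word on the `p` letters before the maximum followed by an up-down word on
the `n - p` letters after it, and the pattern of the first word is forced by `p`. Choosing which
`p` of the `n` smaller letters come first gives André's recurrence
`2 A (n + 1) = [n = 0] + ∑ p, C(n, p) A p A (n - p)`, the two patterns overlapping only when
`n = 0`. The function `f = sec + tan` satisfies `2 f' = 1 + f ^ 2`, and the Leibniz rule turns this
into the same recurrence for its Taylor coefficients, so `zigzag n = A n`.

Up to a null set, the unit cube is the disjoint union of the `n!` order simplices
`{x | x (σ 0) < ⋯ < x (σ (n - 1))}`, which all have volume `1 / n!`. A point of such a simplex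
is up-down exactly when `σ⁻¹` is, so the polytope has volume `A n / n!`.
-/

open MeasureTheory

/-- Euler zigzag numbers, as the Taylor coefficients at `0` of `sec z + tan z`. -/
noncomputable def zigzag (n : ℕ) : ℝ :=
  iteratedDeriv n (fun z : ℝ => (1 + Real.sin z) / Real.cos z) 0

open Function Set
open scoped ENNReal

/-- Ascents exactly at the positions `i ≡ r [MOD 2]`, descents at the others: `r = 0` is
up-down, `r = 1` is down-up. -/
def Alternating (r : ℕ) {m : ℕ} {α : Type*} [LT α] (x : Fin m → α) : Prop :=
  ∀ i : ℕ, (h : i + 1 < m) →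
    if i % 2 = r % 2 then x ⟨i, Nat.lt_of_succ_lt h⟩ < x ⟨i + 1, h⟩
    else x ⟨i + 1, h⟩ < x ⟨i, Nat.lt_of_succ_lt h⟩

namespace Alternating

variable {m r s : ℕ} {α β : Type*}

lemma zero_iff [LT α] {x : Fin m → α} :
    Alternating 0 x ↔ ∀ i : ℕ, (h : i + 1 < m) →
      if Even i then x ⟨i, Nat.lt_of_succ_lt h⟩ < x ⟨i + 1, h⟩
      else x ⟨i + 1, h⟩ < x ⟨i, Nat.lt_of_succ_lt h⟩ := by
  simp only [Alternating, Nat.even_iff, Nat.zero_mod]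

lemma iff_of_mod_eq [LT α] {x : Fin m → α} (h : r % 2 = s % 2) :
    Alternating r x ↔ Alternating s x := by
  simp only [Alternating, h]

lemma of_subsingleton [LT α] (x : Fin m → α) (hm : m ≤ 1) : Alternating r x :=
  fun i h => absurd h (by omega)

lemma comp_iff_of_strictMono [LinearOrder α] [Preorder β] {g : α → β} (hg : StrictMono g)
    {x : Fin m → α} : Alternating r (g ∘ x) ↔ Alternating r x := by
  refine forall₂_congr fun i h => ?_
  split <;> exact hg.lt_iff_lt

lemma comp_iff_of_strictAnti [LinearOrder α] [Preorder β] {g : α → β} (hg : StrictAnti g)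
    {x : Fin m → α} : Alternating (r + 1) (g ∘ x) ↔ Alternating r x := by
  refine forall₂_congr fun i h => ?_
  by_cases hi : i % 2 = r % 2
  · rw [if_pos hi, if_neg (by omega)]; exact hg.lt_iff_gt
  · rw [if_neg hi, if_pos (by omega)]; exact hg.lt_iff_gt

lemma window [LT α] {k : ℕ} {x : Fin m → α} (h : s + k ≤ m)
    (hx : Alternating (s + r) x) : Alternating r (fun j : Fin k => x ⟨s + j, by omega⟩) := by
  intro i hi
  have hxi := hx (s + i) (by omega)
  by_cases hr : i % 2 = r % 2
  · rw [if_pos hr]; rw [if_pos (by omega)] at hxi; exact hxi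
  · rw [if_neg hr]; rw [if_neg (by omega)] at hxi; exact hxi

lemma succ_of_forall_le [LinearOrder α] {x : Fin m → α}
    (hx : Alternating r x) {q : Fin m} (hq : ∀ i, x i ≤ x q) : Alternating (q + 1) x := by
  rcases le_or_gt m 1 with hm | hm
  · exact of_subsingleton x hm
  refine (iff_of_mod_eq ?_).mp hx
  rcases lt_or_ge ((q : ℕ) + 1) m with h | h
  · have hxq := hx q h
    split_ifs at hxq with hr
    · exact absurd (hq _) (not_le.mpr (by simpa using hxq))
    · omega
  · have hxq := hx (q - 1) (by omega)
    split_ifs at hxq with hr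
    · omega
    · exact absurd (hq _) (not_le.mpr (by convert hxq using 2; ext; simp; omega))

end Alternating

noncomputable def upDownCount (n : ℕ) : ℕ :=
  Nat.card {σ : Equiv.Perm (Fin n) // Alternating 0 σ}

lemma card_alternating_perm (n r : ℕ) :
    Nat.card {σ : Equiv.Perm (Fin n) // Alternating r σ} = upDownCount n := by
  rcases Nat.mod_two_eq_zero_or_one r with hr | hr
  · exact Nat.card_congr (Equiv.subtypeEquivRight fun σ => Alternating.iff_of_mod_eq (by omega))
  · refine Nat.card_congr (Equiv.subtypeEquiv (Equiv.mulLeft Fin.revPerm) fun σ => ?_)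
    rw [Equiv.coe_mulLeft, Equiv.Perm.coe_mul]
    exact ((Alternating.comp_iff_of_strictAnti Fin.rev_strictAnti).trans
      (Alternating.iff_of_mod_eq (show (0 + 1) % 2 = r % 2 by omega))).symm

lemma card_alternating_injective_of_card_eq {α : Type*} [LinearOrder α] [Fintype α] {k : ℕ}
    (hk : Fintype.card α = k) (r : ℕ) :
    Nat.card {f : Fin k → α // Injective f ∧ Alternating r f} = upDownCount k := by
  let e : α ≃o Fin k := (monoEquivOfFin α hk).symm
  calc Nat.card {f : Fin k → α // Injective f ∧ Alternating r f}
      = Nat.card {f : Fin k → Fin k // Injective f ∧ Alternating r f} :=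
        Nat.card_congr <| (Equiv.arrowCongr (.refl _) e.toEquiv).subtypeEquiv fun f =>
          and_congr (e.injective.of_comp_iff f).symm
            (Alternating.comp_iff_of_strictMono e.strictMono).symm
    _ = Nat.card {σ : Equiv.Perm (Fin k) // Alternating r σ} :=
        Nat.card_congr
          { toFun := fun f =>
              ⟨.ofBijective f.1 (Finite.injective_iff_bijective.mp f.2.1), f.2.2⟩
            invFun := fun σ => ⟨σ.1, σ.1.injective, σ.2⟩
            left_inv := fun _ => rfl
            right_inv := fun _ => Subtype.ext (Equiv.ext fun _ => rfl) }
    _ = upDownCount k := card_alternating_perm k r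

lemma card_alternating_injective (α : Type*) [LinearOrder α] [Fintype α] (k r : ℕ) :
    Nat.card {f : Fin k → α // Injective f ∧ Alternating r f} =
      (Fintype.card α).choose k * upDownCount k := by
  classical
  let X := {f : Fin k → α // Injective f ∧ Alternating r f}
  let image : X → Finset α := fun f => Finset.univ.image f.1
  have card_image (f : X) : (image f).card = k := by
    simp [image, Finset.card_image_of_injective _ f.2.1]
  have card_fiber (S : Finset α) :
      Nat.card {f : X // image f = S} = if S.card = k then upDownCount k else 0 := by
    split_ifs with hS
    · rw [← card_alternating_injective_of_card_eq (α := S) (by simpa using hS) r]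
      refine Nat.card_congr
        { toFun := fun f =>
            ⟨fun i => ⟨f.1.1 i, f.2.le (Finset.mem_image_of_mem _ (Finset.mem_univ i))⟩,
            fun i j hij => f.1.2.1 (congrArg Subtype.val hij),
            by rw [← Alternating.comp_iff_of_strictMono (Subtype.strictMono_coe (· ∈ S))]
               exact f.1.2.2⟩
          invFun := fun g => ⟨⟨Subtype.val ∘ g.1, Subtype.val_injective.comp g.2.1,
            (Alternating.comp_iff_of_strictMono (Subtype.strictMono_coe _)).mpr g.2.2⟩,
            Finset.eq_of_subset_of_card_le (by simp [image, Finset.image_subset_iff])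
              (by rw [hS, card_image])⟩
          left_inv := fun _ => rfl
          right_inv := fun _ => rfl }
    · exact Nat.card_eq_zero.mpr (.inl ⟨fun f => hS (f.2 ▸ card_image f.1)⟩)
  calc Nat.card X = ∑ S : Finset α, Nat.card {f : X // image f = S} := by
        rw [← Nat.card_congr (Equiv.sigmaFiberEquiv image), Nat.card_sigma]
    _ = (Fintype.card α).choose k * upDownCount k := by
        simp only [card_fiber, Finset.sum_ite, Finset.sum_const, smul_eq_mul, mul_zero, add_zero,
          ← Fintype.card_subtype, Fintype.card_finset_len]

section Splice

variable {α : Type*} {n p : ℕ} (a : Fin p → α) (v : α) (b : Fin (n - p) → α)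

/-- The word `a ++ [v] ++ b`. -/
def splice : Fin (n + 1) → α := fun q =>
  if h : (q : ℕ) < p then a ⟨q, h⟩
  else if h' : (q : ℕ) = p then v
  else b ⟨q - (p + 1), by have := q.isLt; omega⟩

variable {a v b}

lemma splice_of_lt {q : Fin (n + 1)} (h : (q : ℕ) < p) : splice a v b q = a ⟨q, h⟩ :=
  dif_pos h

lemma splice_of_eq {q : Fin (n + 1)} (h : (q : ℕ) = p) : splice a v b q = v := by
  rw [splice, dif_neg (by omega), dif_pos h]

lemma splice_of_gt {q : Fin (n + 1)} (h : p < (q : ℕ)) :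
    splice a v b q = b ⟨q - (p + 1), by have := q.isLt; omega⟩ := by
  rw [splice, dif_neg (by omega), dif_neg (by omega)]

lemma splice_add (j : Fin (n - p)) :
    splice a v b ⟨p + 1 + j, by have := j.isLt; omega⟩ = b j := by
  rw [splice_of_gt (by simp; omega)]
  congr
  simp

lemma splice_injective (ha : Injective a) (hb : Injective b) (hab : ∀ i j, a i ≠ b j)
    (hva : ∀ i, a i ≠ v) (hvb : ∀ j, b j ≠ v) : Injective (splice a v b) := by
  intro q q' h
  rcases lt_trichotomy (q : ℕ) p with hq | hq | hq <;>
    rcases lt_trichotomy (q' : ℕ) p with hq' | hq' | hq' <;>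
    simp only [splice_of_lt, splice_of_eq, splice_of_gt, hq, hq'] at h
  · exact Fin.ext (Fin.mk.inj_iff.mp (ha h))
  · exact (hva _ h).elim
  · exact (hab _ _ h).elim
  · exact (hva _ h.symm).elim
  · exact Fin.ext (hq.trans hq'.symm)
  · exact (hvb _ h.symm).elim
  · exact (hab _ _ h.symm).elim
  · exact (hvb _ h).elim
  · exact Fin.ext (by have := Fin.mk.inj_iff.mp (hb h); omega)

lemma alternating_splice [LT α] (ha : Alternating (p + 1) a) (hb : Alternating 0 b)
    (hav : ∀ i, a i < v) (hbv : ∀ j, b j < v) : Alternating (p + 1) (splice a v b) := by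
  intro i hi
  rcases lt_trichotomy (i + 1) p with h | h | h
  · have hai := ha i h
    rwa [splice_of_lt (q := ⟨i, _⟩) (by simp only; omega),
      splice_of_lt (q := ⟨i + 1, hi⟩) h]
  · rw [if_pos (by omega), splice_of_lt (q := ⟨i, _⟩) (by simp only; omega),
      splice_of_eq (q := ⟨i + 1, hi⟩) h]
    exact hav _
  · obtain rfl | h := (Nat.lt_succ_iff.mp h).eq_or_lt
    · rw [if_neg (by omega), splice_of_eq (q := ⟨p, _⟩) rfl,
        splice_of_gt (q := ⟨_, hi⟩) (by simp only; omega)]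
      exact hbv _
    · obtain ⟨j, rfl⟩ : ∃ j, i = p + 1 + j := ⟨i - (p + 1), by omega⟩
      have hbj := hb j (by omega)
      rw [splice_of_gt (q := ⟨_, _⟩) (by simp only; omega),
        splice_of_gt (q := ⟨_, hi⟩) (by simp only; omega)]
      have hj : (p + 1 + j) % 2 = (p + 1) % 2 ↔ j % 2 = 0 % 2 := by omega
      have hj' : p + 1 + 1 + j - (p + 1) = j + 1 := by omega
      simp only [Nat.add_sub_cancel_left, Nat.add_right_comm _ j 1, hj, hj']
      exact hbj

end Splice

section Peak

variable {n p : ℕ}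

/-- An alternating permutation with its maximum at `p` ascends into `p` and descends out of it,
which forces the pattern `p + 1`. -/
abbrev PeakPerm (n p : ℕ) (hp : p ≤ n) :=
  {σ : Equiv.Perm (Fin (n + 1)) // Alternating (p + 1) σ ∧ σ ⟨p, by omega⟩ = Fin.last n}

abbrev LeftWord (n p : ℕ) :=
  {a : Fin p → {v : Fin (n + 1) // v ≠ Fin.last n} // Injective a ∧ Alternating (p + 1) a}

abbrev RightWord (n p : ℕ) (a : LeftWord n p) :=
  {b : Fin (n - p) → {w : {v : Fin (n + 1) // v ≠ Fin.last n} // w ∉ Set.range a.1} //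
    Injective b ∧ Alternating 0 b}

variable {hp : p ≤ n}

lemma PeakPerm.apply_ne_last (σ : PeakPerm n p hp) {q : Fin (n + 1)} (hq : (q : ℕ) ≠ p) :
    σ.1 q ≠ Fin.last n := fun h =>
  hq (Fin.mk.inj_iff.mp (σ.1.injective (h.trans σ.2.2.symm)) :)

def PeakPerm.leftWord (σ : PeakPerm n p hp) : LeftWord n p :=
  ⟨fun i => ⟨σ.1 ⟨i, by omega⟩, σ.apply_ne_last (by simp; omega)⟩,
    fun i j h => Fin.ext (Fin.mk.inj_iff.mp (σ.1.injective (congrArg Subtype.val h))), by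
    rw [← Alternating.comp_iff_of_strictMono (Subtype.strictMono_coe _)]
    have h := Alternating.window (x := ⇑σ.1) (s := 0) (k := p) (by omega) (by simpa using σ.2.1)
    simp only [zero_add] at h
    exact h⟩

lemma RightWord.strictMono_val (a : LeftWord n p) :
    StrictMono
      (fun w : {w : {v : Fin (n + 1) // v ≠ Fin.last n} // w ∉ Set.range a.1} => w.1.1) :=
  (Subtype.strictMono_coe _).comp (Subtype.strictMono_coe _)

def PeakPerm.rightWord (σ : PeakPerm n p hp) {a : LeftWord n p} (ha : σ.leftWord = a) :
    RightWord n p a :=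
  ⟨fun j => ⟨⟨σ.1 ⟨p + 1 + j, by omega⟩, σ.apply_ne_last (by simp only; omega)⟩, by
      subst ha
      rintro ⟨i, hi⟩
      have := Fin.mk.inj_iff.mp (σ.1.injective (congrArg Subtype.val hi))
      omega⟩,
    fun j k h => Fin.ext (by
      have := Fin.mk.inj_iff.mp (σ.1.injective (congrArg (fun w => w.1.1) h))
      omega), by
    rw [← Alternating.comp_iff_of_strictMono (RightWord.strictMono_val _)]
    exact Alternating.window (x := ⇑σ.1) (s := p + 1) (by omega) σ.2.1⟩

noncomputable def PeakPerm.ofWords (hp : p ≤ n) (a : LeftWord n p) (b : RightWord n p a) :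
    PeakPerm n p hp :=
  ⟨.ofBijective (splice (fun i => (a.1 i).1) (Fin.last n) (fun j => (b.1 j).1.1)) <|
    Finite.injective_iff_bijective.mp <| splice_injective
      (fun i j h => a.2.1 (Subtype.ext h)) (fun i j h => b.2.1 (Subtype.ext (Subtype.ext h)))
      (fun i j h => (b.1 j).2 ⟨i, Subtype.ext h⟩) (fun i => (a.1 i).2) (fun j => (b.1 j).1.2),
    alternating_splice ((Alternating.comp_iff_of_strictMono (Subtype.strictMono_coe _)).mpr a.2.2)
      ((Alternating.comp_iff_of_strictMono (RightWord.strictMono_val a)).mpr b.2.2)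
      (fun i => Fin.lt_last_iff_ne_last.mpr (a.1 i).2)
      (fun j => Fin.lt_last_iff_ne_last.mpr (b.1 j).1.2),
    by simp [splice_of_eq]⟩

lemma PeakPerm.ofWords_apply (a : LeftWord n p) (b : RightWord n p a) (q : Fin (n + 1)) :
    (PeakPerm.ofWords hp a b).1 q =
      splice (fun i => (a.1 i).1) (Fin.last n) (fun j => (b.1 j).1.1) q :=
  rfl

lemma PeakPerm.leftWord_ofWords (a : LeftWord n p) (b : RightWord n p a) :
    (PeakPerm.ofWords hp a b).leftWord = a :=
  Subtype.ext (funext fun i => Subtype.ext ((ofWords_apply a b _).trans (splice_of_lt i.isLt)))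

lemma PeakPerm.rightWord_ofWords (a : LeftWord n p) (b : RightWord n p a) :
    (PeakPerm.ofWords hp a b).rightWord (leftWord_ofWords a b) = b :=
  Subtype.ext (funext fun j =>
    Subtype.ext (Subtype.ext ((ofWords_apply a b _).trans (splice_add j))))

lemma PeakPerm.ofWords_leftWord_rightWord (σ : PeakPerm n p hp) :
    PeakPerm.ofWords hp σ.leftWord (σ.rightWord rfl) = σ := by
  refine Subtype.ext (Equiv.ext fun q => ?_)
  rw [ofWords_apply]
  rcases lt_trichotomy (q : ℕ) p with h | h | h
  · exact splice_of_lt h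
  · rw [splice_of_eq h]
    exact σ.2.2.symm.trans (congrArg σ.1 (Fin.ext h.symm))
  · rw [splice_of_gt h]
    exact congrArg σ.1 (Fin.ext (by simp only; omega))

lemma PeakPerm.card_fiber_leftWord (a : LeftWord n p) :
    Nat.card {σ : PeakPerm n p hp // σ.leftWord = a} = upDownCount (n - p) := by
  classical
  rw [← card_alternating_injective_of_card_eq (α := {w // w ∉ Set.range a.1}) _ 0]
  · refine Nat.card_congr
      { toFun := fun σ => σ.1.rightWord σ.2
        invFun := fun b => ⟨PeakPerm.ofWords hp a b, PeakPerm.leftWord_ofWords a b⟩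
        left_inv := ?_
        right_inv := PeakPerm.rightWord_ofWords a }
    rintro ⟨σ, rfl⟩
    exact Subtype.ext σ.ofWords_leftWord_rightWord
  · rw [Fintype.card_subtype_compl, Set.card_range_of_injective a.2.1]
    simp

lemma card_peakPerm (hp : p ≤ n) :
    Nat.card (PeakPerm n p hp) = n.choose p * upDownCount p * upDownCount (n - p) := by
  classical
  calc Nat.card (PeakPerm n p hp)
      = ∑ a : LeftWord n p, Nat.card {σ : PeakPerm n p hp // σ.leftWord = a} := by
        rw [← Nat.card_congr (Equiv.sigmaFiberEquiv PeakPerm.leftWord), Nat.card_sigma]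
    _ = Nat.card (LeftWord n p) * upDownCount (n - p) := by
        rw [Finset.sum_congr rfl fun a _ => PeakPerm.card_fiber_leftWord a, Finset.sum_const,
          Finset.card_univ, smul_eq_mul, Nat.card_eq_fintype_card]
    _ = n.choose p * upDownCount p * upDownCount (n - p) := by
        rw [card_alternating_injective]
        simp

end Peak

lemma card_subtype_or_add_card_subtype_and {α : Type*} [Finite α] (P Q : α → Prop) :
    Nat.card {x // P x ∨ Q x} + Nat.card {x // P x ∧ Q x} =
      Nat.card {x // P x} + Nat.card {x // Q x} := by
  classical
  have := Fintype.ofFinite α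
  simp only [Nat.card_eq_fintype_card, Fintype.card_subtype, Finset.filter_or, Finset.filter_and,
    Finset.card_union_add_card_inter]

lemma upDownCount_zero : upDownCount 0 = 1 := by
  simp [upDownCount, Alternating]

lemma card_alternating_zero_and_one (m : ℕ) :
    Nat.card {σ : Equiv.Perm (Fin m) // Alternating 0 σ ∧ Alternating 1 σ} =
      if m ≤ 1 then 1 else 0 := by
  split_ifs with hm
  · rw [Nat.card_congr (Equiv.subtypeUnivEquiv fun σ =>
      ⟨Alternating.of_subsingleton σ hm, Alternating.of_subsingleton σ hm⟩)]
    interval_cases m <;> simp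
  · refine Nat.card_eq_zero.mpr (.inl ⟨fun σ => ?_⟩)
    have h0 := σ.2.1 0 (by omega)
    have h1 := σ.2.2 0 (by omega)
    rw [if_pos rfl] at h0
    rw [if_neg (by decide)] at h1
    exact lt_asymm h0 h1

lemma card_alternating_zero_or_one (n : ℕ) :
    Nat.card {σ : Equiv.Perm (Fin (n + 1)) // Alternating 0 σ ∨ Alternating 1 σ} =
      ∑ p ∈ Finset.range (n + 1), n.choose p * upDownCount p * upDownCount (n - p) := by
  let X := {σ : Equiv.Perm (Fin (n + 1)) // Alternating 0 σ ∨ Alternating 1 σ}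
  let peak (σ : X) : Fin (n + 1) := σ.1.symm (Fin.last n)
  have card_fiber (q : Fin (n + 1)) : Nat.card {σ : X // peak σ = q} =
      Nat.card (PeakPerm n q (Nat.lt_succ_iff.mp q.isLt)) := by
    refine Nat.card_congr ((Equiv.subtypeSubtypeEquivSubtypeInter
      (fun σ : Equiv.Perm (Fin (n + 1)) => Alternating 0 σ ∨ Alternating 1 σ)
      (fun σ : Equiv.Perm _ => σ.symm (Fin.last n) = q)).trans
      (Equiv.subtypeEquivRight fun σ => ?_))
    rw [Equiv.symm_apply_eq, eq_comm, Fin.eta]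
    refine and_congr_left fun hq => ⟨?_, fun h => ?_⟩
    · rintro (h | h) <;> exact h.succ_of_forall_le (hq ▸ fun i => Fin.le_last _)
    · rcases Nat.mod_two_eq_zero_or_one ((q : ℕ) + 1) with hr | hr
      exacts [.inl ((Alternating.iff_of_mod_eq (by omega)).mp h),
        .inr ((Alternating.iff_of_mod_eq (by omega)).mp h)]
  calc Nat.card X = ∑ q : Fin (n + 1), Nat.card {σ : X // peak σ = q} := by
        rw [← Nat.card_congr (Equiv.sigmaFiberEquiv peak), Nat.card_sigma]
    _ = ∑ q : Fin (n + 1), n.choose q * upDownCount q * upDownCount (n - q) := by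
        simp only [card_fiber, card_peakPerm]
    _ = _ := Fin.sum_univ_eq_sum_range (fun p => n.choose p * upDownCount p * upDownCount (n - p)) _

lemma upDownCount_recurrence (n : ℕ) :
    2 * upDownCount (n + 1) = (if n = 0 then 1 else 0) +
      ∑ p ∈ Finset.range (n + 1), n.choose p * upDownCount p * upDownCount (n - p) := by
  have h := card_subtype_or_add_card_subtype_and (α := Equiv.Perm (Fin (n + 1)))
    (Alternating 0 ·) (Alternating 1 ·)
  rw [card_alternating_zero_or_one, card_alternating_zero_and_one, card_alternating_perm,
    card_alternating_perm] at h
  simp only [add_le_iff_nonpos_left, nonpos_iff_eq_zero] at h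
  omega

lemma hasDerivAt_one_add_sin_div_cos {x : ℝ} (hx : Real.cos x ≠ 0) :
    HasDerivAt (fun z => (1 + Real.sin z) / Real.cos z)
      ((1 + ((1 + Real.sin x) / Real.cos x) ^ 2) / 2) x := by
  refine (((Real.hasDerivAt_sin x).const_add 1).fun_div (Real.hasDerivAt_cos x) hx).congr_deriv ?_
  field_simp
  nlinarith [Real.sin_sq_add_cos_sq x]

lemma zigzag_recurrence (n : ℕ) :
    2 * zigzag (n + 1) = (if n = 0 then 1 else 0) +
      ∑ p ∈ Finset.range (n + 1), n.choose p * zigzag p * zigzag (n - p) := by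
  set f : ℝ → ℝ := fun z => (1 + Real.sin z) / Real.cos z
  have hf : ContDiffAt ℝ n f 0 :=
    (contDiffAt_const.add Real.contDiff_sin.contDiffAt).div Real.contDiff_cos.contDiffAt (by simp)
  have hderiv : deriv f =ᶠ[nhds 0] fun z => (1 + f z * f z) / 2 := by
    filter_upwards [Real.continuous_cos.continuousAt.eventually_ne (by simp : Real.cos 0 ≠ 0)]
      with z hz
    rw [(hasDerivAt_one_add_sin_div_cos hz).deriv, sq]
  calc 2 * zigzag (n + 1) = iteratedDeriv n (fun z => 1 + f z * f z) 0 := by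
        rw [zigzag, iteratedDeriv_succ', hderiv.iteratedDeriv_eq, iteratedDeriv_div_const]
        ring
    _ = _ := by
        rw [iteratedDeriv_fun_add contDiffAt_const (hf.mul hf), iteratedDeriv_const,
          iteratedDeriv_fun_mul hf hf]
        rfl

lemma zigzag_eq_upDownCount (n : ℕ) : zigzag n = upDownCount n := by
  induction n using Nat.strong_induction_on with
  | _ n ih =>
    rcases n with _ | n
    · simp [zigzag, upDownCount_zero]
    · have hcount := congrArg (Nat.cast : ℕ → ℝ) (upDownCount_recurrence n)
      have hzigzag := zigzag_recurrence n
      push_cast at hcount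
      rw [Finset.sum_congr rfl fun p hp => by
        rw [ih p (by simp at hp; omega), ih (n - p) (by omega)]] at hzigzag
      linarith

section Volume

variable {n : ℕ}

def orderSimplex (σ : Equiv.Perm (Fin n)) : Set (Fin n → ℝ) :=
  {x | (∀ i, x i ∈ Icc (0 : ℝ) 1) ∧ StrictMono (x ∘ σ)}

lemma measurableSet_orderSimplex (σ : Equiv.Perm (Fin n)) : MeasurableSet (orderSimplex σ) := by
  have : orderSimplex σ = (⋂ i, (· i) ⁻¹' Icc (0 : ℝ) 1) ∩
      ⋂ (i : Fin n) (j : Fin n) (_ : i < j), {x | x (σ i) < x (σ j)} := by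
    ext x
    simp [orderSimplex, StrictMono]
  rw [this]
  exact (MeasurableSet.iInter fun i => measurable_pi_apply i measurableSet_Icc).inter
    (.iInter fun i => .iInter fun j => .iInter fun _ =>
      measurableSet_lt (measurable_pi_apply _) (measurable_pi_apply _))

lemma injective_of_mem_orderSimplex {σ : Equiv.Perm (Fin n)} {x : Fin n → ℝ}
    (hx : x ∈ orderSimplex σ) : Injective x :=
  (σ.symm.injective_comp _).mp (by simpa [comp_assoc] using hx.2.injective.comp σ.symm.injective)

lemma pairwise_disjoint_orderSimplex : Pairwise (Disjoint on orderSimplex (n := n)) := by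
  intro σ τ hne
  refine Set.disjoint_left.mpr fun x hσ hτ => hne ?_
  have hx := injective_of_mem_orderSimplex hσ
  have hsort (ρ : Equiv.Perm (Fin n)) (hρ : x ∈ orderSimplex ρ) : ρ = Tuple.sort x :=
    Equiv.ext fun i => hx (congrFun (Tuple.comp_sort_eq_comp_iff_monotone.mpr hρ.2.monotone) i)
  rw [hsort σ hσ, hsort τ hτ]

lemma mem_orderSimplex_sort {x : Fin n → ℝ} (hx : ∀ i, x i ∈ Icc (0 : ℝ) 1)
    (hinj : Injective x) :
    x ∈ orderSimplex (Tuple.sort x) :=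
  ⟨hx, (Tuple.monotone_sort x).strictMono_of_injective (hinj.comp (Tuple.sort x).injective)⟩

lemma iUnion_orderSimplex :
    ⋃ σ : Equiv.Perm (Fin n), orderSimplex σ =
      {x | ∀ i, x i ∈ Icc (0 : ℝ) 1} ∩ {x | Injective x} := by
  ext x
  simp only [mem_iUnion]
  exact ⟨fun ⟨σ, hσ⟩ => ⟨hσ.1, injective_of_mem_orderSimplex hσ⟩,
    fun ⟨hx, hinj⟩ => ⟨_, mem_orderSimplex_sort hx hinj⟩⟩

lemma volume_orderSimplex_eq (σ : Equiv.Perm (Fin n)) :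
    volume (orderSimplex σ) = volume (orderSimplex (1 : Equiv.Perm (Fin n))) := by
  have hmp := volume_preserving_arrowCongr' σ.symm (MeasurableEquiv.refl ℝ) (.id volume)
  rw [← hmp.measure_preimage (measurableSet_orderSimplex 1).nullMeasurableSet]
  congr 1
  ext x
  exact and_congr σ.forall_congr_right.symm Iff.rfl

lemma volume_setOf_apply_eq_apply {i j : Fin n} (hij : i ≠ j) :
    volume {x : Fin n → ℝ | x i = x j} = 0 := by
  let φ : (Fin n → ℝ) →ₗ[ℝ] ℝ :=
    LinearMap.proj (R := ℝ) (φ := fun _ => ℝ) i - LinearMap.proj j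
  have hker : {x : Fin n → ℝ | x i = x j} = LinearMap.ker φ := by
    ext x
    simp [φ, sub_eq_zero]
  rw [hker]
  refine Measure.addHaar_submodule _ _ fun htop => ?_
  have := congrArg (· (Pi.single i 1)) (LinearMap.ker_eq_top.mp htop)
  simp [φ, hij.symm] at this

lemma volume_not_injective : volume {x : Fin n → ℝ | ¬ Injective x} = 0 := by
  refine measure_mono_null (t := ⋃ (i : Fin n) (j : Fin n) (_ : i ≠ j), {x | x i = x j})
    (fun x hx => ?_) (measure_iUnion_null fun i => measure_iUnion_null fun j =>
      measure_iUnion_null fun hij => volume_setOf_apply_eq_apply hij)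
  obtain ⟨i, j, h, hne⟩ : ∃ i j, x i = x j ∧ i ≠ j := by simpa [Injective] using hx
  exact mem_iUnion₂.mpr ⟨i, j, mem_iUnion.mpr ⟨hne, h⟩⟩

lemma volume_unitCube : volume {x : Fin n → ℝ | ∀ i, x i ∈ Icc (0 : ℝ) 1} = 1 := by
  simpa [Set.pi] using volume_pi_pi (fun _ : Fin n => Icc (0 : ℝ) 1)

lemma volume_orderSimplex (σ : Equiv.Perm (Fin n)) :
    volume (orderSimplex σ) = (n.factorial : ℝ≥0∞)⁻¹ := by
  refine (volume_orderSimplex_eq σ).trans (ENNReal.eq_inv_of_mul_eq_one_left ?_)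
  calc volume (orderSimplex 1) * n.factorial
      = ∑ τ : Equiv.Perm (Fin n), volume (orderSimplex τ) := by
        simp [volume_orderSimplex_eq, Fintype.card_perm, mul_comm]
    _ = volume ({x : Fin n → ℝ | ∀ i, x i ∈ Icc (0 : ℝ) 1} ∩ {x | Injective x}) := by
        rw [← iUnion_orderSimplex, measure_iUnion pairwise_disjoint_orderSimplex
          measurableSet_orderSimplex, tsum_fintype]
    _ = 1 := by
        rw [measure_inter_conull (t := {x | Injective x}) volume_not_injective, volume_unitCube]

lemma alternating_iff_of_mem_orderSimplex {σ : Equiv.Perm (Fin n)} {x : Fin n → ℝ}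
    (hx : x ∈ orderSimplex σ) (r : ℕ) : Alternating r x ↔ Alternating r σ.symm := by
  rw [← Alternating.comp_iff_of_strictMono hx.2]
  congr!
  ext i
  simp

lemma volume_alternating (n r : ℕ) :
    volume {x : Fin n → ℝ | (∀ i, x i ∈ Icc (0 : ℝ) 1) ∧ Alternating r x} =
      upDownCount n / n.factorial := by
  classical
  set T := {x : Fin n → ℝ | (∀ i, x i ∈ Icc (0 : ℝ) 1) ∧ Alternating r x}
  have hT : T ∩ {x | Injective x} =
      ⋃ σ : {σ : Equiv.Perm (Fin n) // Alternating r σ}, orderSimplex σ.1.symm := by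
    ext x
    simp only [mem_inter_iff, mem_iUnion]
    constructor
    · rintro ⟨⟨hx, halt⟩, hinj⟩
      have hsort := mem_orderSimplex_sort hx hinj
      exact ⟨⟨(Tuple.sort x).symm, (alternating_iff_of_mem_orderSimplex hsort r).mp halt⟩,
        by simpa using hsort⟩
    · rintro ⟨σ, hσ⟩
      refine ⟨⟨hσ.1, ?_⟩, injective_of_mem_orderSimplex hσ⟩
      simpa [alternating_iff_of_mem_orderSimplex hσ r] using σ.2
  calc volume T = volume (T ∩ {x | Injective x}) :=
        (measure_inter_conull (t := {x | Injective x}) volume_not_injective).symm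
    _ = ∑ σ : {σ : Equiv.Perm (Fin n) // Alternating r σ},
          volume (orderSimplex σ.1.symm) := by
        rw [hT, ← tsum_fintype (L := .unconditional _)]
        exact measure_iUnion (pairwise_disjoint_orderSimplex.comp_of_injective
          (Equiv.symm_bijective.injective.comp Subtype.val_injective))
          (fun σ => measurableSet_orderSimplex _)
    _ = upDownCount n / n.factorial := by
        simp [volume_orderSimplex, ← card_alternating_perm n r, Nat.card_eq_fintype_card,
          ENNReal.div_eq_inv_mul, mul_comm]

end Volume

theorem zigzag_alternating_volume_and_card (n : ℕ) :
    volume {x : Fin n → ℝ | (∀ i, x i ∈ Set.Icc (0 : ℝ) 1) ∧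
        ∀ i : ℕ, (h : i + 1 < n) →
          if Even i then x ⟨i, by omega⟩ < x ⟨i + 1, h⟩
          else x ⟨i + 1, h⟩ < x ⟨i, by omega⟩}
      = ENNReal.ofReal (zigzag n / n.factorial) ∧
    (Nat.card {σ : Equiv.Perm (Fin n) // ∀ i : ℕ, (h : i + 1 < n) →
        if Even i then σ ⟨i, by omega⟩ < σ ⟨i + 1, h⟩
        else σ ⟨i + 1, h⟩ < σ ⟨i, by omega⟩} : ℝ) = zigzag n := by
  simp_rw [← Alternating.zero_iff, zigzag_eq_upDownCount]
  refine ⟨?_, rfl⟩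
  rw [volume_alternating, ENNReal.ofReal_div_of_pos (by positivity), ENNReal.ofReal_natCast,
    ENNReal.ofReal_natCast]
end

section
/- The exponential generating function ∑_{n≥0} A_n z^n/n! of the zigzag numbers satisfies ∑_{n≥0} A_n z^n/n! = (1 + sin z)/cos z, where A_n = J_{n+1}(-1) with J the Mallows–Riordan polynomials. -/
/-!
`f = (1 + sin)/cos` solves the Riccati equation `2 f' = 1 + f²` and satisfies `f(-x) f(x) = 1`.
Differentiating both identities `n` times at `0` by Leibniz' rule and adding them, the odd-index
terms cancel: `f⁽ⁿ⁺¹⁾(0) = ∑_{i even} C(n,i) f⁽ⁱ⁾(0) f⁽ⁿ⁻ⁱ⁾(0)`. Since `1 + θ + ⋯ + θ^i` is the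
parity indicator of `i` at `θ = -1`, this is the Kreweras recursion for `J_{n+1}(-1)`. The same
computation over `ℂ` identifies the complex Taylor coefficients at `0` with the real ones, and `f`
is holomorphic on the disc `|z| < π/2`, where it is therefore the sum of its Taylor series.
-/

open Polynomial MeasureTheory

open Filter Topology Finset
open scoped ContDiff

lemma eval_neg_one_geom_sum_X {R : Type*} [CommRing R] (i : ℕ) :
    (∑ j ∈ range (i + 1), X ^ j : R[X]).eval (-1) = if Even i then 1 else 0 := by
  simp only [eval_finsetSum, eval_pow, eval_X, neg_one_geom_sum, Nat.even_add_one]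
  split_ifs <;> simp_all

lemma eval_neg_one_MRJ_add_two (n : ℕ) :
    (MRJ (n + 2)).eval (-1) = ∑ i ∈ range (n + 1) with Even i,
      n.choose i * (MRJ (i + 1)).eval (-1) * (MRJ (n - i + 1)).eval (-1) := by
  rw [MRJ, sum_attach (range (n + 1)) (fun i => (n.choose i : ℚ[X]) *
    (∑ j ∈ range (i + 1), X ^ j) * MRJ (i + 1) * MRJ (n + 1 - i)), eval_finsetSum, sum_filter]
  refine sum_congr rfl fun i hi => ?_
  rw [Nat.sub_add_comm (mem_range_succ_iff.mp hi)]
  simp only [eval_mul, eval_natCast, eval_neg_one_geom_sum_X]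
  split_ifs <;> ring

lemma eq_eval_neg_one_MRJ_of_recurrence {K : Type*} [Field K] [CharZero K] {c : ℕ → K}
    (h0 : c 0 = 1)
    (hrec : ∀ n, c (n + 1) = ∑ i ∈ range (n + 1) with Even i, n.choose i * c i * c (n - i))
    (n : ℕ) : c n = ((MRJ (n + 1)).eval (-1) : ℚ) := by
  induction n using Nat.strong_induction_on with
  | _ n ih =>
    match n with
    | 0 => simp [h0, MRJ]
    | n + 1 =>
      rw [hrec, eval_neg_one_MRJ_add_two]
      push_cast
      refine sum_congr rfl fun i hi => ?_
      have hi := mem_range_succ_iff.mp (mem_filter.mp hi).1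
      rw [ih i (by omega), ih (n - i) (by omega)]

section Riccati

variable {𝕜 : Type*} [NontriviallyNormedField 𝕜] {f : 𝕜 → 𝕜}

lemma two_mul_iteratedDeriv_succ_of_deriv_eq [CharZero 𝕜] (hf : ContDiffAt 𝕜 ∞ f 0)
    (hderiv : deriv f =ᶠ[𝓝 0] fun x => (1 + f x ^ 2) / 2) (n : ℕ) :
    2 * iteratedDeriv (n + 1) f 0 = (if n = 0 then 1 else 0) +
      ∑ i ∈ range (n + 1), n.choose i * iteratedDeriv i f 0 * iteratedDeriv (n - i) f 0 := by
  have hfn : ContDiffAt 𝕜 n f 0 := hf.of_le (mod_cast le_top)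
  simp only [sq] at hderiv
  rw [iteratedDeriv_succ', hderiv.iteratedDeriv_eq, iteratedDeriv_div_const,
    iteratedDeriv_fun_add contDiffAt_const (hfn.mul hfn), iteratedDeriv_const,
    iteratedDeriv_fun_mul hfn hfn, mul_div_cancel₀ _ two_ne_zero]

lemma sum_neg_one_pow_mul_choose_mul_iteratedDeriv (hf : ContDiffAt 𝕜 ∞ f 0)
    (hinv : (fun x => f (-x) * f x) =ᶠ[𝓝 0] fun _ => 1) (n : ℕ) :
    ∑ i ∈ range (n + 1), (-1) ^ i * n.choose i * iteratedDeriv i f 0 * iteratedDeriv (n - i) f 0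
      = if n = 0 then 1 else 0 := by
  have hfn : ContDiffAt 𝕜 n f 0 := hf.of_le (mod_cast le_top)
  have hfneg : ContDiffAt 𝕜 n (fun x => f (-x)) 0 :=
    (neg_zero (G := 𝕜) ▸ hfn).comp 0 contDiffAt_id.neg
  rw [← iteratedDeriv_const (𝕜 := 𝕜) (x := 0), ← hinv.iteratedDeriv_eq,
    iteratedDeriv_fun_mul hfneg hfn]
  refine sum_congr rfl fun i _ => ?_
  rw [iteratedDeriv_comp_neg, neg_zero, smul_eq_mul]
  ring

lemma iteratedDeriv_succ_eq_sum_even [CharZero 𝕜] (hf : ContDiffAt 𝕜 ∞ f 0)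
    (hderiv : deriv f =ᶠ[𝓝 0] fun x => (1 + f x ^ 2) / 2)
    (hinv : (fun x => f (-x) * f x) =ᶠ[𝓝 0] fun _ => 1) (n : ℕ) :
    iteratedDeriv (n + 1) f 0 = ∑ i ∈ range (n + 1) with Even i,
      n.choose i * iteratedDeriv i f 0 * iteratedDeriv (n - i) f 0 := by
  have h := two_mul_iteratedDeriv_succ_of_deriv_eq hf hderiv n
  rw [← sum_neg_one_pow_mul_choose_mul_iteratedDeriv hf hinv n, ← sum_add_distrib] at h
  rw [sum_filter]
  refine mul_left_cancel₀ (two_ne_zero (α := 𝕜)) (h.trans ?_)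
  rw [mul_sum]
  refine sum_congr rfl fun i _ => ?_
  rcases Nat.even_or_odd i with hi | hi
  · rw [if_pos hi, hi.neg_one_pow]; ring
  · rw [if_neg (Nat.not_even_iff_odd.mpr hi), hi.neg_one_pow]; ring

lemma iteratedDeriv_eq_eval_neg_one_MRJ [CharZero 𝕜] (hf : ContDiffAt 𝕜 ∞ f 0)
    (h0 : f 0 = 1)
    (hderiv : deriv f =ᶠ[𝓝 0] fun x => (1 + f x ^ 2) / 2)
    (hinv : (fun x => f (-x) * f x) =ᶠ[𝓝 0] fun _ => 1) (n : ℕ) :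
    iteratedDeriv n f 0 = ((MRJ (n + 1)).eval (-1) : ℚ) :=
  eq_eval_neg_one_MRJ_of_recurrence (c := fun n => iteratedDeriv n f 0) (by simpa)
    (iteratedDeriv_succ_eq_sum_even hf hderiv hinv) n

end Riccati

namespace Real

lemma contDiffAt_one_add_sin_div_cos {x : ℝ} (hx : cos x ≠ 0) (n : WithTop ℕ∞) :
    ContDiffAt ℝ n (fun x => (1 + sin x) / cos x) x :=
  (contDiffAt_const.add contDiff_sin.contDiffAt).div contDiff_cos.contDiffAt hx

lemma deriv_one_add_sin_div_cos {x : ℝ} (hx : cos x ≠ 0) :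
    deriv (fun x => (1 + sin x) / cos x) x = (1 + ((1 + sin x) / cos x) ^ 2) / 2 := by
  rw [(((hasDerivAt_sin x).const_add 1).fun_div (hasDerivAt_cos x) hx).deriv]
  field_simp
  linear_combination sin_sq_add_cos_sq x

lemma one_add_sin_div_cos_neg_mul {x : ℝ} (hx : cos x ≠ 0) :
    (1 + sin (-x)) / cos (-x) * ((1 + sin x) / cos x) = 1 := by
  rw [sin_neg, cos_neg]
  field_simp
  linear_combination - sin_sq_add_cos_sq x

lemma iteratedDeriv_one_add_sin_div_cos_eq_eval_neg_one_MRJ (n : ℕ) :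
    iteratedDeriv n (fun x => (1 + sin x) / cos x) 0 = ((MRJ (n + 1)).eval (-1) : ℚ) := by
  have hcos : ∀ᶠ x in 𝓝 0, cos x ≠ 0 := continuous_cos.continuousAt.eventually_ne (by simp)
  refine iteratedDeriv_eq_eval_neg_one_MRJ (contDiffAt_one_add_sin_div_cos (by simp) ∞) (by simp)
    ?_ ?_ n
  · filter_upwards [hcos] with x hx using deriv_one_add_sin_div_cos hx
  · filter_upwards [hcos] with x hx using one_add_sin_div_cos_neg_mul hx

end Real

namespace Complex

lemma contDiffAt_one_add_sin_div_cos {z : ℂ} (hz : cos z ≠ 0) (n : WithTop ℕ∞) :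
    ContDiffAt ℂ n (fun z => (1 + sin z) / cos z) z :=
  (contDiffAt_const.add contDiff_sin.contDiffAt).div contDiff_cos.contDiffAt hz

lemma deriv_one_add_sin_div_cos {z : ℂ} (hz : cos z ≠ 0) :
    deriv (fun z => (1 + sin z) / cos z) z = (1 + ((1 + sin z) / cos z) ^ 2) / 2 := by
  rw [(((hasDerivAt_sin z).const_add 1).fun_div (hasDerivAt_cos z) hz).deriv]
  field_simp
  linear_combination sin_sq_add_cos_sq z

lemma one_add_sin_div_cos_neg_mul {z : ℂ} (hz : cos z ≠ 0) :
    (1 + sin (-z)) / cos (-z) * ((1 + sin z) / cos z) = 1 := by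
  rw [sin_neg, cos_neg]
  field_simp
  linear_combination - sin_sq_add_cos_sq z

lemma iteratedDeriv_one_add_sin_div_cos_eq_eval_neg_one_MRJ (n : ℕ) :
    iteratedDeriv n (fun z => (1 + sin z) / cos z) 0 = ((MRJ (n + 1)).eval (-1) : ℚ) := by
  have hcos : ∀ᶠ z in 𝓝 0, cos z ≠ 0 := continuous_cos.continuousAt.eventually_ne (by simp)
  refine iteratedDeriv_eq_eval_neg_one_MRJ (contDiffAt_one_add_sin_div_cos (by simp) ∞) (by simp)
    ?_ ?_ n
  · filter_upwards [hcos] with z hz using deriv_one_add_sin_div_cos hz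
  · filter_upwards [hcos] with z hz using one_add_sin_div_cos_neg_mul hz

lemma cos_ne_zero_of_norm_lt {z : ℂ} (hz : ‖z‖ < Real.pi / 2) : cos z ≠ 0 := by
  refine cos_ne_zero_iff.mpr fun k hk => ?_
  have hk1 : (1 : ℝ) ≤ |((2 * k + 1 : ℤ) : ℝ)| := by
    rw [← Int.cast_abs]
    exact_mod_cast Int.one_le_abs (by omega)
  push_cast at hk1
  rw [hk, show (2 * k + 1) * (Real.pi : ℂ) / 2 = ((2 * k + 1) * Real.pi / 2 : ℝ) by
    push_cast; rfl, norm_real, Real.norm_eq_abs, abs_div, abs_mul, abs_of_pos Real.pi_pos,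
    abs_two] at hz
  nlinarith [Real.pi_pos]

end Complex

theorem zigzag_egf_sec_add_tan :
    (∀ z : ℝ, |z| < Real.pi / 2 →
      HasSum (fun n : ℕ => zigzag n * z ^ n / n.factorial)
        ((1 + Real.sin z) / Real.cos z)) ∧
    ∀ n : ℕ, zigzag n = ((MRJ (n + 1)).eval (-1) : ℚ) := by
  refine ⟨fun z hz => ?_, Real.iteratedDeriv_one_add_sin_div_cos_eq_eval_neg_one_MRJ⟩
  have hcoeff (n : ℕ) :
      iteratedDeriv n (fun w => (1 + Complex.sin w) / Complex.cos w) 0 = zigzag n := by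
    rw [Complex.iteratedDeriv_one_add_sin_div_cos_eq_eval_neg_one_MRJ, zigzag,
      Real.iteratedDeriv_one_add_sin_div_cos_eq_eval_neg_one_MRJ, Complex.ofReal_ratCast]
  have hdiff : DifferentiableOn ℂ (fun w => (1 + Complex.sin w) / Complex.cos w)
      (Metric.ball 0 (Real.pi / 2)) := fun w hw =>
    ((Complex.contDiffAt_one_add_sin_div_cos
      (Complex.cos_ne_zero_of_norm_lt (mem_ball_zero_iff.mp hw)) 1).differentiableAt
      one_ne_zero).differentiableWithinAt
  have hsum := Complex.hasSum_taylorSeries_on_ball hdiff (z := z) (by simpa using hz)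
  simp only [sub_zero, hcoeff, smul_eq_mul] at hsum
  rw [← Complex.hasSum_ofReal]
  push_cast
  refine hsum.congr_fun fun n => ?_
  ring
end

section
/- Let θ < 0 and let the AR(1) process Y_0 = 0, Y_n = θY_{n-1} + X_n have i.i.d. innovations whose law has no atoms on [0,∞). Then the persistence probabilities p_n(θ) = P(Y_1 ≥ 0, …, Y_n ≥ 0) satisfy ∑_{k=0}^n (-1)^k p_k(θ) p_{n-k}(1/θ) = 0 for all n ≥ 1. -/
open Polynomial MeasureTheory

/-- Persistence probability `p_n(θ) = P(Y_1 ≥ 0, …, Y_n ≥ 0)` of the AR(1) process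
`Y_0 = 0`, `Y_n = θ Y_{n-1} + X_n` with i.i.d. innovations of law `μ`, expressed via
the product law of the first `n` innovations: `Y_{k+1} = ∑_{j ≤ k} θ^{k-j} X_{j+1}`. -/
noncomputable def persist (μ : Measure ℝ) (θ : ℝ) (n : ℕ) : ℝ :=
  ((Measure.pi fun _ : Fin n => μ)
    {u | ∀ k : Fin n, 0 ≤ ∑ j ∈ Finset.Iic k, θ ^ (k.1 - j.1) * u j}).toReal

/-- The uniform probability law on the interval `[a,b]`. -/
noncomputable def unif (a b : ℝ) : Measure ℝ :=
  ENNReal.ofReal (b - a)⁻¹ • volume.restrict (Set.Icc a b)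

/-!
Write `W_i = θ⁻ⁱ Y_i`, a partial sum of the innovations. Since `θ < 0`, `Y_i ≥ 0` iff
`(-1)ⁱ W_i ≥ 0`, and the process with parameter `1/θ` driven by the last `m` of `n` innovations
in reverse order equals `θ^(n-m+1) (W_n - W_{n-m})`. By independence of the first `k` and the last
`n - k` innovations, `p_k(θ) p_{n-k}(1/θ)` is thus the probability that `(-1)ⁱ W_i ≥ 0` for
`i ≤ k` and `(-1)ⁱ (W_i - W_n) ≥ 0` for `k ≤ i ≤ n`. For each outcome the admissible `k` form an
interval `[b, a]`; unless some `Y_i` vanishes on a persistence path (a null event, as the law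
has no atoms on `[0, ∞)`), the sign of `W_n` at both ends forces `a + 1 - b` to be even, so the
alternating sum vanishes pointwise.
-/

open Finset

namespace AR1Persistence

lemma pow_mul_nonneg_iff_neg_one_pow_mul {R : Type*} [CommRing R] [LinearOrder R]
    [IsStrictOrderedRing R] {θ c : R} (hθ : θ < 0) (i : ℕ) :
    0 ≤ θ ^ i * c ↔ 0 ≤ (-1) ^ i * c := by
  rw [show θ ^ i = (-θ) ^ i * (-1) ^ i by rw [← mul_pow, neg_mul_neg, mul_one], mul_assoc,
    mul_nonneg_iff_of_pos_left (pow_pos (neg_pos.2 hθ) i)]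

lemma even_add_of_neg_one_pow_mul_neg {R : Type*} [CommRing R] [LinearOrder R]
    [IsStrictOrderedRing R] {a b : ℕ} {c : R} (ha : (-1) ^ a * c < 0) (hb : (-1) ^ b * c < 0) :
    Even (a + b) := by
  by_contra hodd
  have hprod : 0 < (-1) ^ (a + b) * c ^ 2 := by
    rw [pow_add, show (-1) ^ a * (-1) ^ b * c ^ 2 = ((-1) ^ a * c) * ((-1) ^ b * c) by ring]
    exact mul_pos_of_neg_of_neg ha hb
  rw [(Nat.not_even_iff_odd.1 hodd).neg_one_pow] at hprod
  nlinarith [sq_nonneg c]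

lemma sum_Ico_neg_one_pow_eq_zero {R : Type*} [Ring R] {a b : ℕ} (h : Even (a + b)) :
    ∑ k ∈ Ico a b, (-1 : R) ^ k = 0 := by
  rcases le_or_gt a b with hab | hab
  · simp_rw [sum_Ico_eq_sum_range, pow_add]
    rw [← mul_sum, neg_one_geom_sum, if_pos ((Nat.even_sub hab).2 (Nat.even_add.1 h).symm),
      mul_zero]
  · rw [Ico_eq_empty_of_le hab.le, sum_empty]

section Deterministic

variable {θ : ℝ} {x y : ℕ → ℝ} {i n k : ℕ}

/-- `Y_i` for the AR(1) recursion `Y_0 = 0`, `Y_{i+1} = θ Y_i + x i`. -/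
noncomputable def ar1 (θ : ℝ) (x : ℕ → ℝ) (i : ℕ) : ℝ :=
  ∑ j ∈ range i, θ ^ (i - 1 - j) * x j

noncomputable def ar1Normalized (θ : ℝ) (x : ℕ → ℝ) (i : ℕ) : ℝ :=
  (θ ^ i)⁻¹ * ar1 θ x i

def IsPersistent (θ : ℝ) (x : ℕ → ℝ) (m : ℕ) : Prop :=
  ∀ i ≤ m, 0 ≤ ar1 θ x i

@[simp] lemma ar1_zero (θ : ℝ) (x : ℕ → ℝ) : ar1 θ x 0 = 0 := by simp [ar1]

lemma ar1_succ (θ : ℝ) (x : ℕ → ℝ) (i : ℕ) : ar1 θ x (i + 1) = θ * ar1 θ x i + x i := by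
  rw [ar1, sum_range_succ, ar1, mul_sum, Nat.add_sub_cancel, Nat.sub_self, pow_zero, one_mul]
  congr 1
  refine sum_congr rfl fun j hj => ?_
  rw [← mul_assoc, ← pow_succ', show i - 1 - j + 1 = i - j by have := mem_range.1 hj; omega]

lemma ar1_congr (h : ∀ j < i, x j = y j) : ar1 θ x i = ar1 θ y i :=
  sum_congr rfl fun j hj => by rw [h j (mem_range.1 hj)]

lemma isPersistent_congr {m : ℕ} (h : ∀ j < m, x j = y j) :
    IsPersistent θ x m ↔ IsPersistent θ y m :=
  forall₂_congr fun i hi => by rw [ar1_congr fun j hj => h j (by omega)]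

lemma ar1_eq_pow_mul_normalized (hθ : θ ≠ 0) (x : ℕ → ℝ) (i : ℕ) :
    ar1 θ x i = θ ^ i * ar1Normalized θ x i := by
  rw [ar1Normalized, mul_inv_cancel_left₀ (pow_ne_zero _ hθ)]

@[simp] lemma ar1Normalized_zero (θ : ℝ) (x : ℕ → ℝ) : ar1Normalized θ x 0 = 0 := by
  simp [ar1Normalized]

lemma ar1Normalized_succ (hθ : θ ≠ 0) (x : ℕ → ℝ) (i : ℕ) :
    ar1Normalized θ x (i + 1) = ar1Normalized θ x i + x i / θ ^ (i + 1) := by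
  simp only [ar1Normalized, ar1_succ]
  field_simp
  ring

lemma ar1_inv_reverse (hθ : θ ≠ 0) (x : ℕ → ℝ) {m : ℕ} (hm : m ≤ n) :
    ar1 θ⁻¹ (fun j => x (n - 1 - j)) m =
      θ ^ (n - m + 1) * (ar1Normalized θ x n - ar1Normalized θ x (n - m)) := by
  induction m with
  | zero => simp
  | succ m ih =>
    obtain ⟨p, rfl⟩ : ∃ p, n = p + m + 1 := ⟨n - m - 1, by omega⟩
    rw [ar1_succ, ih (by omega), show p + m + 1 - m = p + 1 by omega,
      show p + m + 1 - (m + 1) = p by omega, show p + m + 1 - 1 - m = p by omega,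
      ar1Normalized_succ hθ x p]
    field_simp
    ring

section SignPattern

variable {w : ℕ → ℝ} {a b : ℕ}

def AltPrefix (w : ℕ → ℝ) (k : ℕ) : Prop :=
  ∀ i ≤ k, 0 ≤ (-1) ^ i * w i

def AltSuffix (w : ℕ → ℝ) (n k : ℕ) : Prop :=
  ∀ i, k ≤ i → i ≤ n → 0 ≤ (-1) ^ i * (w i - w n)

lemma AltPrefix.mono (h : AltPrefix w k) (hjk : a ≤ k) : AltPrefix w a :=
  fun i hi => h i (hi.trans hjk)

lemma AltPrefix.succ (h : AltPrefix w k) (hk : 0 ≤ (-1) ^ (k + 1) * w (k + 1)) :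
    AltPrefix w (k + 1) := fun i hi => by
  rcases Nat.le_succ_iff.1 hi with hi | rfl
  exacts [h i hi, hk]

lemma AltSuffix.mono (h : AltSuffix w n k) (hkj : k ≤ a) : AltSuffix w n a :=
  fun i hi => h i (hkj.trans hi)

lemma AltSuffix.pred (h : AltSuffix w n (k + 1)) (hk : 0 ≤ (-1) ^ k * (w k - w n)) :
    AltSuffix w n k := fun i hi => by
  rcases hi.eq_or_lt with rfl | hi
  exacts [fun _ => hk, h i hi]

lemma altSuffix_self (w : ℕ → ℝ) (n : ℕ) : AltSuffix w n n :=
  fun i hi hin => by rw [le_antisymm hin hi, sub_self, mul_zero]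

lemma neg_one_pow_succ_mul_lt_zero (hnd : ∀ i < n, AltPrefix w i → w (i + 1) ≠ 0)
    (hn : 1 ≤ n) (ha : AltPrefix w a) (hmax : a < n → ¬AltPrefix w (a + 1))
    (hsuf : AltSuffix w n a) (han : a ≤ n) : (-1) ^ (a + 1) * w n < 0 := by
  rcases han.lt_or_eq with hlt | rfl
  · have hstep : (-1) ^ (a + 1) * w (a + 1) < 0 := by
      by_contra! hstep
      exact hmax hlt (ha.succ hstep)
    have hgap := hsuf (a + 1) a.le_succ hlt
    rw [mul_sub] at hgap
    linarith
  · obtain ⟨j, rfl⟩ : ∃ j, a = j + 1 := ⟨a - 1, by omega⟩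
    have hne : (-1) ^ (j + 1) * w (j + 1) ≠ 0 :=
      mul_ne_zero (pow_ne_zero _ (by norm_num)) (hnd j (by omega) (ha.mono j.le_succ))
    have hpos := lt_of_le_of_ne (ha (j + 1) le_rfl) hne.symm
    rw [pow_succ _ (j + 1)]
    linarith

lemma neg_one_pow_mul_lt_zero (hw0 : w 0 = 0) (hwn : w n ≠ 0) (hsuf : AltSuffix w n b)
    (hmin : 0 < b → ¬AltSuffix w n (b - 1)) (hpre : AltPrefix w (b - 1)) :
    (-1) ^ b * w n < 0 := by
  cases b with
  | zero =>
    have h0 := hsuf 0 le_rfl n.zero_le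
    rw [hw0, pow_zero, one_mul, zero_sub, neg_nonneg] at h0
    rw [pow_zero, one_mul]
    exact lt_of_le_of_ne h0 hwn
  | succ c =>
    have hstep : (-1) ^ c * (w c - w n) < 0 := by
      by_contra! hstep
      exact hmin c.succ_pos (hsuf.pred hstep)
    have hc := hpre c le_rfl
    rw [mul_sub] at hstep
    rw [pow_succ]
    linarith

open scoped Classical in
theorem sum_altPrefix_altSuffix_eq_zero (hn : 1 ≤ n) (hw0 : w 0 = 0)
    (hnd : ∀ i < n, AltPrefix w i → w (i + 1) ≠ 0) :
    ∑ k ∈ range (n + 1), (if AltPrefix w k ∧ AltSuffix w n k then (-1 : ℝ) ^ k else 0) = 0 := by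
  set a := Nat.findGreatest (AltPrefix w) n
  set b := Nat.find ⟨n, altSuffix_self w n⟩
  have han : a ≤ n := Nat.findGreatest_le n
  have ha : AltPrefix w a := Nat.findGreatest_spec (P := AltPrefix w) n.zero_le
    fun i hi => by rw [Nat.le_zero.1 hi, hw0, mul_zero]
  have hpre : ∀ k ≤ n, AltPrefix w k ↔ k ≤ a := fun k hk => ⟨Nat.le_findGreatest hk, ha.mono⟩
  have hsuf : ∀ k, AltSuffix w n k ↔ b ≤ k :=
    fun k => ⟨Nat.find_min' _, (Nat.find_spec ⟨n, altSuffix_self w n⟩).mono⟩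
  have hf_updatelter : (range (n + 1)).filter (fun k => AltPrefix w k ∧ AltSuffix w n k) =
      Ico b (a + 1) := by
    ext k
    simp only [mem_filter, mem_range, mem_Ico, hsuf]
    constructor
    · rintro ⟨hk, hka, hbk⟩
      exact ⟨hbk, Nat.lt_succ_of_le ((hpre k (by omega)).1 hka)⟩
    · rintro ⟨hbk, hka⟩
      exact ⟨by omega, (hpre k (by omega)).2 (by omega), hbk⟩
  rw [← sum_filter, hf_updatelter]
  rcases lt_or_ge a b with hab | hba
  · rw [Ico_eq_empty_of_le (by omega), sum_empty]
  have hU := neg_one_pow_succ_mul_lt_zero hnd hn ha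
    (fun h hsucc => by have := (hpre _ h).1 hsucc; omega) ((hsuf a).2 hba) han
  have hL := neg_one_pow_mul_lt_zero hw0 (by rintro h; rw [h, mul_zero] at hU; exact hU.false)
    (Nat.find_spec ⟨n, altSuffix_self w n⟩) (fun h hpred => by have := (hsuf _).1 hpred; omega)
    (ha.mono (by omega))
  exact sum_Ico_neg_one_pow_eq_zero (even_add_of_neg_one_pow_mul_neg hL hU)

end SignPattern

lemma isPersistent_iff_altPrefix (hθ : θ < 0) :
    IsPersistent θ x k ↔ AltPrefix (ar1Normalized θ x) k :=
  forall₂_congr fun i _ => by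
    rw [ar1_eq_pow_mul_normalized hθ.ne, pow_mul_nonneg_iff_neg_one_pow_mul hθ]

lemma isPersistent_inv_reverse_iff_altSuffix (hθ : θ < 0) (hk : k ≤ n) :
    IsPersistent θ⁻¹ (fun j => x (n - 1 - j)) (n - k) ↔ AltSuffix (ar1Normalized θ x) n k := by
  set w := ar1Normalized θ x
  have key : ∀ m ≤ n, 0 ≤ ar1 θ⁻¹ (fun j => x (n - 1 - j)) m ↔
      0 ≤ (-1) ^ (n - m) * (w (n - m) - w n) := fun m hm => by
    rw [ar1_inv_reverse hθ.ne x hm, pow_mul_nonneg_iff_neg_one_pow_mul hθ, pow_succ,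
      mul_assoc, neg_one_mul, neg_sub]
  constructor
  · intro h i hki hin
    simpa only [Nat.sub_sub_self hin] using (key (n - i) (by omega)).1 (h (n - i) (by omega))
  · exact fun h m hm => (key m (by omega)).2 (h (n - m) (by omega) (by omega))

open scoped Classical in
theorem sum_neg_one_pow_isPersistent_eq_zero (hθ : θ < 0) (hn : 1 ≤ n)
    (hnd : ∀ i < n, IsPersistent θ x i → ar1 θ x (i + 1) ≠ 0) :
    ∑ k ∈ range (n + 1), (if IsPersistent θ x k ∧ IsPersistent θ⁻¹ (fun j => x (n - 1 - j)) (n - k)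
      then (-1 : ℝ) ^ k else 0) = 0 := by
  refine (sum_congr rfl fun k hk => ?_).trans
    (sum_altPrefix_altSuffix_eq_zero hn (ar1Normalized_zero θ x) fun i hi hpre hw => ?_)
  · rw [isPersistent_iff_altPrefix hθ,
      isPersistent_inv_reverse_iff_altSuffix hθ (Nat.lt_succ_iff.1 (mem_range.1 hk))]
  · refine hnd i hi ((isPersistent_iff_altPrefix hθ).2 hpre) ?_
    rw [ar1_eq_pow_mul_normalized hθ.ne, hw, mul_zero]

end Deterministic

section Measure

variable {θ : ℝ} {n k : ℕ}

noncomputable def seqOfFin {n : ℕ} (x : Fin n → ℝ) (j : ℕ) : ℝ :=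
  if h : j < n then x ⟨j, h⟩ else 0

lemma seqOfFin_of_lt (x : Fin n → ℝ) {j : ℕ} (h : j < n) : seqOfFin x j = x ⟨j, h⟩ := dif_pos h

lemma measurable_seqOfFin_apply (n j : ℕ) : Measurable fun x : Fin n → ℝ => seqOfFin x j := by
  unfold seqOfFin
  split_ifs
  exacts [measurable_pi_apply _, measurable_const]

lemma measurable_ar1 {α : Type*} [MeasurableSpace α] {F : α → ℕ → ℝ}
    (hF : ∀ j, Measurable fun a => F a j) (θ : ℝ) (i : ℕ) : Measurable fun a => ar1 θ (F a) i :=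
  Finset.measurable_sum _ fun j _ => (hF j).const_mul _

lemma measurableSet_isPersistent {α : Type*} [MeasurableSpace α] {F : α → ℕ → ℝ}
    (hF : ∀ j, Measurable fun a => F a j) (θ : ℝ) (m : ℕ) :
    MeasurableSet {a | IsPersistent θ (F a) m} := by
  simp only [IsPersistent, Set.ofPred_forall]
  exact .iInter fun i => .iInter fun _ => measurableSet_le measurable_const (measurable_ar1 hF θ i)

lemma sum_Iic_eq_ar1 (u : Fin n → ℝ) (k : Fin n) :
    ∑ j ∈ Iic k, θ ^ (k.1 - j.1) * u j = ar1 θ (seqOfFin u) (k + 1) := by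
  calc ∑ j ∈ Iic k, θ ^ (k.1 - j.1) * u j
      = ∑ j ∈ (Iic k).map Fin.valEmbedding, θ ^ (k.1 - j) * seqOfFin u j := by
        rw [sum_map]
        exact sum_congr rfl fun j _ => by rw [Fin.valEmbedding_apply, seqOfFin_of_lt u j.2]
    _ = ar1 θ (seqOfFin u) (k + 1) := by
        rw [Fin.map_valEmbedding_Iic, ← Nat.range_succ_eq_Iic, ar1, Nat.add_sub_cancel]

lemma persist_eq_measureReal (μ : Measure ℝ) (θ : ℝ) (m : ℕ) :
    persist μ θ m = (Measure.pi fun _ : Fin m => μ).real {u | IsPersistent θ (seqOfFin u) m} := by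
  rw [persist, measureReal_def]
  congr 2
  ext u
  simp only [Set.mem_ofPred_eq, sum_Iic_eq_ar1]
  constructor
  · intro h i hi
    rcases i with _ | i
    · rw [ar1_zero]
    · exact h ⟨i, hi⟩
  · exact fun h k => h (k + 1) k.2

def finSumRevEquiv (hk : k ≤ n) : Fin k ⊕ Fin (n - k) ≃ Fin n :=
  (Equiv.sumCongr (Equiv.refl _) Fin.revPerm).trans
    (finSumFinEquiv.trans (finCongr (Nat.add_sub_cancel' hk)))

lemma finSumRevEquiv_inl (hk : k ≤ n) (i : Fin k) : (finSumRevEquiv hk (.inl i)).1 = i := by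
  simp [finSumRevEquiv]

lemma finSumRevEquiv_inr (hk : k ≤ n) (i : Fin (n - k)) :
    (finSumRevEquiv hk (.inr i)).1 = n - 1 - i := by
  simp [finSumRevEquiv]
  omega

def dualPersistenceSet (θ θ' : ℝ) (n k : ℕ) : Set (Fin n → ℝ) :=
  {x | IsPersistent θ (seqOfFin x) k ∧ IsPersistent θ' (fun j => seqOfFin x (n - 1 - j)) (n - k)}

lemma measurableSet_dualPersistenceSet (θ θ' : ℝ) (n k : ℕ) :
    MeasurableSet (dualPersistenceSet θ θ' n k) :=
  (measurableSet_isPersistent (measurable_seqOfFin_apply n) θ k).inter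
    (measurableSet_isPersistent (fun _ => measurable_seqOfFin_apply n _) θ' (n - k))

lemma persist_mul_persist (μ : Measure ℝ) [SigmaFinite μ] (θ θ' : ℝ) (hk : k ≤ n) :
    persist μ θ k * persist μ θ' (n - k) =
      (Measure.pi fun _ : Fin n => μ).real (dualPersistenceSet θ θ' n k) := by
  set e := finSumRevEquiv hk
  set split := (MeasurableEquiv.piCongrLeft (fun _ => ℝ) e).symm.trans
    (MeasurableEquiv.sumPiEquivProdPi fun _ => ℝ)
  have hsplit : MeasurePreserving split (Measure.pi fun _ : Fin n => μ)
      ((Measure.pi fun _ : Fin k => μ).prod (Measure.pi fun _ : Fin (n - k) => μ)) :=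
    (measurePreserving_sumPiEquivProdPi _).comp (measurePreserving_piCongrLeft _ e).symm
  have hpre : split ⁻¹' ({u | IsPersistent θ (seqOfFin u) k} ×ˢ
      {v | IsPersistent θ' (seqOfFin v) (n - k)}) = dualPersistenceSet θ θ' n k := by
    ext x
    refine and_congr (isPersistent_congr fun j hj => ?_) (isPersistent_congr fun j hj => ?_)
    · rw [seqOfFin_of_lt _ hj, seqOfFin_of_lt _ (by omega)]
      exact congrArg x (Fin.ext (finSumRevEquiv_inl hk _))
    · rw [seqOfFin_of_lt _ hj, seqOfFin_of_lt _ (by omega)]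
      exact congrArg x (Fin.ext (finSumRevEquiv_inr hk _))
  rw [persist_eq_measureReal, persist_eq_measureReal, ← measureReal_prod_prod, ← hpre,
    hsplit.measureReal_preimage]
  exact ((measurableSet_isPersistent (measurable_seqOfFin_apply _) θ k).prod
    (measurableSet_isPersistent (measurable_seqOfFin_apply _) θ' (n - k))).nullMeasurableSet

lemma measure_pi_coord_eq_null {α : Type*} [MeasurableSpace α] [MeasurableEq α]
    (μ : Measure α) [SigmaFinite μ] (i₀ : Fin n) {T : Set α} (hT : MeasurableSet T)
    (hatom : ∀ a ∈ T, μ {a} = 0) {f : (Fin n → α) → α} (hf : Measurable f)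
    (hf_update : ∀ x a, f (Function.update x i₀ a) = f x) :
    Measure.pi (fun _ => μ) {x | f x ∈ T ∧ x i₀ = f x} = 0 := by
  obtain ⟨N, rfl⟩ : ∃ N, n = N + 1 := ⟨n - 1, by have := i₀.pos; omega⟩
  set e := MeasurableEquiv.piFinSuccAbove (fun _ : Fin (N + 1) => α) i₀
  set S : Set (α × (Fin N → α)) := {p | f (e.symm p) ∈ T ∧ p.1 = f (e.symm p)}
  have hfe : Measurable fun p => f (e.symm p) := hf.comp e.symm.measurable
  have hS : MeasurableSet S :=
    (hT.preimage hfe).inter (measurableSet_eq_fun measurable_fst hfe)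
  have hset : {x | f x ∈ T ∧ x i₀ = f x} = e ⁻¹' S := by
    ext x
    simp only [S, Set.mem_preimage, Set.mem_ofPred_eq, e.symm_apply_apply]
    rfl
  have hslice : ∀ z, μ ((fun a => (a, z)) ⁻¹' S) = 0 := by
    intro z
    have hconst : ∀ a b, f (e.symm (a, z)) = f (e.symm (b, z)) := fun a b => by
      change f (Fin.insertNth i₀ a z) = f (Fin.insertNth i₀ b z)
      simpa only [Fin.update_insertNth] using (hf_update (Fin.insertNth i₀ a z) b).symm
    have hsub : ((fun a => (a, z)) ⁻¹' S).Subsingleton :=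
      fun a ha b hb => ha.2.trans ((hconst a b).trans hb.2.symm)
    rcases hsub.eq_empty_or_singleton with h | ⟨a, h⟩
    · rw [h, measure_empty]
    · have ha : a ∈ (fun a => (a, z)) ⁻¹' S := h ▸ rfl
      rw [h]
      refine hatom a ?_
      rw [show a = _ from ha.2]
      exact ha.1
  rw [hset, (measurePreserving_piFinSuccAbove _ i₀).measure_preimage_equiv,
    Measure.prod_apply_symm hS]
  simp only [hslice, lintegral_zero]

lemma ae_ar1_succ_ne_zero (μ : Measure ℝ) [SigmaFinite μ] (hatom : ∀ a : ℝ, 0 ≤ a → μ {a} = 0)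
    (hθ : θ ≤ 0) {i : ℕ} (hi : i < n) :
    ∀ᵐ x ∂(Measure.pi fun _ : Fin n => μ),
      IsPersistent θ (seqOfFin x) i → ar1 θ (seqOfFin x) (i + 1) ≠ 0 := by
  have hnull := measure_pi_coord_eq_null μ ⟨i, hi⟩ measurableSet_Ici hatom
    ((measurable_ar1 (measurable_seqOfFin_apply n) θ i).const_mul (-θ)) fun x a => by
      refine congrArg _ (ar1_congr fun j hj => ?_)
      rw [seqOfFin_of_lt _ (hj.trans hi), seqOfFin_of_lt _ (hj.trans hi),
        Function.update_of_ne (Fin.ne_of_val_ne hj.ne)]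
  refine ae_iff.2 (measure_mono_null (fun x hx => ?_) hnull)
  simp only [Set.mem_ofPred_eq, Classical.not_imp, not_not] at hx
  obtain ⟨hpers, hzero⟩ := hx
  refine ⟨mul_nonneg (neg_nonneg.2 hθ) (hpers i le_rfl), ?_⟩
  rw [ar1_succ, seqOfFin_of_lt x hi] at hzero
  linarith

end Measure

end AR1Persistence

open AR1Persistence

theorem persistence_duality_neg_drift (μ : Measure ℝ) [IsProbabilityMeasure μ]
    (hatom : ∀ x : ℝ, 0 ≤ x → μ {x} = 0) (θ : ℝ) (hθ : θ < 0) (n : ℕ) (hn : 1 ≤ n) :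
    ∑ k ∈ Finset.range (n + 1), (-1 : ℝ) ^ k * persist μ θ k * persist μ θ⁻¹ (n - k) = 0 := by
  set π := Measure.pi fun _ : Fin n => μ
  have hterm : ∀ k ∈ range (n + 1), (-1 : ℝ) ^ k * persist μ θ k * persist μ θ⁻¹ (n - k) =
      ∫ x, (dualPersistenceSet θ θ⁻¹ n k).indicator (fun _ => (-1 : ℝ) ^ k) x ∂π := fun k hk => by
    rw [mul_assoc, persist_mul_persist μ θ θ⁻¹ (Nat.lt_succ_iff.1 (mem_range.1 hk)),
      integral_indicator_const _ (measurableSet_dualPersistenceSet θ θ⁻¹ n k), smul_eq_mul,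
      mul_comm]
  rw [sum_congr rfl hterm, ← integral_finsetSum _ fun k _ =>
    (integrable_const _).indicator (measurableSet_dualPersistenceSet θ θ⁻¹ n k)]
  refine integral_eq_zero_of_ae ?_
  have hnondeg : ∀ᵐ x ∂π, ∀ i < n,
      IsPersistent θ (seqOfFin x) i → ar1 θ (seqOfFin x) (i + 1) ≠ 0 :=
    ae_all_iff.2 fun i => Filter.eventually_imp_distrib_left.2 fun hi =>
      ae_ar1_succ_ne_zero μ hatom hθ.le hi
  filter_upwards [hnondeg] with x hx
  classical
  simpa only [Finset.sum_apply, Pi.zero_apply, Set.indicator_apply, dualPersistenceSet,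
    Set.mem_ofPred_eq] using sum_neg_one_pow_isPersistent_eq_zero hθ hn hx
end

section
/- Let θ > 0 and let the AR(1) process Y_0 = 0, Y_n = θY_{n-1} + X_n have i.i.d. innovations with a continuous and symmetric law. Then ∑_{k=0}^n p_k(θ) p_{n-k}(1/θ) = 1 for all n ≥ 0, where p_n(θ) = P(Y_1 ≥ 0, …, Y_n ≥ 0); equivalently (∑_{n≥0} p_n(θ) z^n)(∑_{n≥0} p_n(1/θ) z^n) = 1/(1-z) for |z| < 1. -/
open Polynomial MeasureTheory

section PersistenceAux
open Finset

noncomputable def pext {n : ℕ} (u : Fin n → ℝ) (j : ℕ) : ℝ := if h : j < n then u ⟨j, h⟩ else 0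

lemma pext_lt {n : ℕ} (u : Fin n → ℝ) {j : ℕ} (h : j < n) : pext u j = u ⟨j, h⟩ := dif_pos h

lemma sum_pext_eq {n : ℕ} (f : ℕ → ℝ) (u : Fin n → ℝ) (s : Finset ℕ) (hs : ∀ j ∈ s, j < n) :
    ∑ j ∈ s, f j * pext u j = ∑ j : Fin n, (if (j : ℕ) ∈ s then f j * u j else 0) := by
  rw [← Finset.sum_filter]
  refine Finset.sum_bij' (fun j hj => (⟨j, hs j hj⟩ : Fin n)) (fun j _ => (j : ℕ))
    ?_ ?_ ?_ ?_ ?_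
  · intro j hj; simp [hj]
  · intro j hj; simpa using (Finset.mem_filter.1 hj).2
  · intro j hj; rfl
  · intro j hj; rfl
  · intro j hj; rw [pext_lt u (hs j hj)]

noncomputable def Qm (μ : Measure ℝ) (b : ℕ → ℝ) (n : ℕ) : ENNReal :=
  (Measure.pi fun _ : Fin n => μ)
    {u | ∀ k < n, 0 ≤ ∑ j ∈ Finset.range (k + 1), b j * pext u j}

lemma coef_eq {θ : ℝ} (hθ : 0 < θ) {j k : ℕ} (hj : j ≤ k) :
    (θ⁻¹) ^ (k + 1) * θ ^ (j + 1) = (θ⁻¹) ^ (k - j) := by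
  have hθne : θ ≠ 0 := ne_of_gt hθ
  have h1 : θ ^ (k + 1) = θ ^ (k - j) * θ ^ (j + 1) := by rw [← pow_add]; congr 1; omega
  calc (θ⁻¹) ^ (k + 1) * θ ^ (j + 1) = (θ ^ (k - j) * θ ^ (j + 1))⁻¹ * θ ^ (j + 1) := by
        rw [inv_pow, h1]
    _ = (θ ^ (k - j))⁻¹ * ((θ ^ (j + 1))⁻¹ * θ ^ (j + 1)) := by rw [mul_inv]; ring
    _ = (θ ^ (k - j))⁻¹ := by rw [inv_mul_cancel₀ (pow_ne_zero _ hθne), mul_one]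
    _ = (θ⁻¹) ^ (k - j) := (inv_pow θ _).symm

lemma coef_eq' {θ : ℝ} (hθ : 0 < θ) {j k : ℕ} (hj : j ≤ k) :
    (θ⁻¹) ^ (k + 1) * θ ^ (k - j) = (θ⁻¹) ^ (j + 1) := by
  have hθne : θ ≠ 0 := ne_of_gt hθ
  have h1 : θ ^ (k + 1) = θ ^ (j + 1) * θ ^ (k - j) := by rw [← pow_add]; congr 1; omega
  calc (θ⁻¹) ^ (k + 1) * θ ^ (k - j) = (θ ^ (j + 1) * θ ^ (k - j))⁻¹ * θ ^ (k - j) := by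
        rw [inv_pow, h1]
    _ = (θ ^ (j + 1))⁻¹ * ((θ ^ (k - j))⁻¹ * θ ^ (k - j)) := by rw [mul_inv]; ring
    _ = (θ ^ (j + 1))⁻¹ := by rw [inv_mul_cancel₀ (pow_ne_zero _ hθne), mul_one]
    _ = (θ⁻¹) ^ (j + 1) := (inv_pow θ _).symm

lemma persist_eq_Qm (μ : Measure ℝ) (θ : ℝ) (hθ : 0 < θ) (n : ℕ) :
    persist μ θ n = (Qm μ (fun j => (θ⁻¹) ^ (j + 1)) n).toReal := by
  unfold persist Qm
  congr 2
  ext u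
  simp only [Set.mem_setOf_eq]
  rw [Fin.forall_iff]
  refine forall_congr' fun k => ?_
  refine forall_congr' fun hk => ?_
  have e1 : ∑ j ∈ Finset.Iic (⟨k, hk⟩ : Fin n), θ ^ ((⟨k, hk⟩ : Fin n).1 - j.1) * u j
      = ∑ j ∈ Finset.range (k + 1), θ ^ (k - j) * pext u j := by
    rw [sum_pext_eq (fun j => θ ^ (k - j)) u (Finset.range (k+1)) (fun j hj => by
      simp at hj; omega), ← Finset.sum_filter]
    apply Finset.sum_congr _ fun j _ => rfl
    ext j; simp [Fin.le_def, Nat.lt_succ_iff]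
  have e2 : ∑ j ∈ Finset.range (k + 1), (θ⁻¹) ^ (j + 1) * pext u j
      = (θ⁻¹) ^ (k + 1) * ∑ j ∈ Finset.range (k + 1), θ ^ (k - j) * pext u j := by
    rw [Finset.mul_sum]
    refine Finset.sum_congr rfl fun j hj => ?_
    rw [← mul_assoc, coef_eq' hθ (by simp at hj; omega)]
  rw [e1, e2, mul_nonneg_iff_of_pos_left (pow_pos (inv_pos.2 hθ) _)]

lemma measurable_pext {n : ℕ} (j : ℕ) : Measurable fun u : Fin n → ℝ => pext u j := by
  unfold pext; split_ifs
  exacts [measurable_pi_apply _, measurable_const]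


lemma pi_hyperplane_null (μ : Measure ℝ) [IsProbabilityMeasure μ]
    (hcont : ∀ x : ℝ, μ {x} = 0) {n : ℕ} (c : Fin n → ℝ) (j₀ : Fin n) (hc : c j₀ ≠ 0) (t : ℝ) :
    (Measure.pi fun _ : Fin n => μ) {u | ∑ j, c j * u j = t} = 0 := by
  cases n with
  | zero => exact absurd j₀.2 (by simp)
  | succ m =>
    set e := MeasurableEquiv.piFinSuccAbove (fun _ : Fin (m+1) => ℝ) j₀ with he
    have mp := measurePreserving_piFinSuccAbove (fun _ : Fin (m+1) => μ) j₀
    set T : Set (ℝ × (Fin m → ℝ)) :=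
      {p | c j₀ * p.1 + ∑ j : Fin m, c (j₀.succAbove j) * p.2 j = t} with hT
    have hTm : MeasurableSet T := by
      apply measurableSet_eq_fun _ measurable_const
      fun_prop
    have hpre : {u : Fin (m+1) → ℝ | ∑ j, c j * u j = t} = e ⁻¹' T := by
      ext u
      simp only [Set.mem_setOf_eq, Set.mem_preimage, hT, he,
        MeasurableEquiv.piFinSuccAbove_apply]
      rw [Fin.sum_univ_succAbove (fun j => c j * u j) j₀]
      rfl
    rw [hpre, mp.measure_preimage hTm.nullMeasurableSet]
    rw [Measure.prod_apply_symm hTm]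
    have : ∀ y : Fin m → ℝ,
        μ ((fun x => (x, y)) ⁻¹' T) = 0 := by
      intro y
      have : ((fun x => (x, y)) ⁻¹' T) = {(t - ∑ j : Fin m, c (j₀.succAbove j) * y j) / c j₀} := by
        ext x
        simp only [Set.mem_preimage, hT, Set.mem_setOf_eq, Set.mem_singleton_iff]
        rw [eq_div_iff hc, mul_comm x (c j₀)]
        constructor <;> intro h <;> linarith
      rw [this]; exact hcont _
    simp only [this, lintegral_zero]


lemma measurePreserving_finSplit (μ : Measure ℝ) [IsProbabilityMeasure μ] {k m n : ℕ}
    (hkm : k + m = n) :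
    MeasurePreserving
      (fun (p : (Fin k → ℝ) × (Fin m → ℝ)) (j : Fin n) =>
        if h : (j : ℕ) < k then p.1 ⟨j, h⟩ else p.2 ⟨(j : ℕ) - k, by omega⟩)
      ((Measure.pi fun _ : Fin k => μ).prod (Measure.pi fun _ : Fin m => μ))
      (Measure.pi fun _ : Fin n => μ) := by
  have hmeas : Measurable
      (fun (p : (Fin k → ℝ) × (Fin m → ℝ)) (j : Fin n) =>
        if h : (j : ℕ) < k then p.1 ⟨j, h⟩ else p.2 ⟨(j : ℕ) - k, by omega⟩) := by
    rw [measurable_pi_iff]; intro j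
    by_cases h : (j : ℕ) < k
    · simp only [dif_pos h]; exact (measurable_pi_apply _).comp measurable_fst
    · simp only [dif_neg h]; exact (measurable_pi_apply _).comp measurable_snd
  refine ⟨hmeas, ?_⟩
  refine (Measure.pi_eq (μ := fun _ : Fin n => μ) fun s hs => ?_).symm
  rw [Measure.map_apply hmeas (MeasurableSet.univ_pi hs)]
  have hpre : (fun (p : (Fin k → ℝ) × (Fin m → ℝ)) (j : Fin n) =>
        if h : (j : ℕ) < k then p.1 ⟨j, h⟩ else p.2 ⟨(j : ℕ) - k, by omega⟩) ⁻¹'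
        Set.pi Set.univ s =
      (Set.pi Set.univ fun i : Fin k => s ⟨i, by omega⟩) ×ˢ
      (Set.pi Set.univ fun i : Fin m => s ⟨k + i, by omega⟩) := by
    ext p
    simp only [Set.mem_preimage, Set.mem_pi, Set.mem_univ, forall_true_left, Set.mem_prod]
    constructor
    · intro H
      refine ⟨fun i => ?_, fun i => ?_⟩
      · have := H ⟨i, by omega⟩
        simpa [i.2] using this
      · have := H ⟨k + i, by omega⟩
        have h2 : ¬ (k + (i:ℕ) < k) := by omega
        simpa [h2] using this
    · rintro ⟨H1, H2⟩ j
      by_cases h : (j : ℕ) < k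
      · simpa [h] using H1 ⟨j, h⟩
      · have := H2 ⟨(j : ℕ) - k, by omega⟩
        have e : (⟨k + ((j:ℕ) - k), by omega⟩ : Fin n) = j := by
          apply Fin.ext; simp; omega
        rw [e] at this
        simpa [h] using this
  rw [hpre, Measure.prod_prod, Measure.pi_pi, Measure.pi_pi]
  -- product split
  have key : ∀ (g : ℕ → ENNReal), (∏ j : Fin n, g j) =
      (∏ i : Fin k, g i) * ∏ i : Fin m, g (k + i) := by
    intro g
    rw [Fin.prod_univ_eq_prod_range (fun j => g j) n, ← hkm, Finset.prod_range_add,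
      Fin.prod_univ_eq_prod_range (fun j => g j) k, Fin.prod_univ_eq_prod_range (fun j => g (k+j)) m]
  have := key (fun j => if h : j < n then μ (s ⟨j, h⟩) else 1)
  simp only [Fin.is_lt, dif_pos, Fin.eta] at this
  rw [eq_comm]
  convert this using 2
  · refine Finset.prod_congr rfl fun i _ => ?_
    have h1 : (i:ℕ) < n := by omega
    rw [dif_pos h1]
  · refine Finset.prod_congr rfl fun i _ => ?_
    have h1 : k + (i:ℕ) < n := by omega
    rw [dif_pos h1]


lemma measurePreserving_negRev (μ : Measure ℝ) [IsProbabilityMeasure μ]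
    (hsym : μ.map (fun x => -x) = μ) (k : ℕ) :
    MeasurePreserving (fun (v : Fin k → ℝ) (j : Fin k) => -(v j.rev))
      (Measure.pi fun _ : Fin k => μ) (Measure.pi fun _ : Fin k => μ) := by
  have hmeas : Measurable (fun (v : Fin k → ℝ) (j : Fin k) => -(v j.rev)) := by
    rw [measurable_pi_iff]; intro j
    exact (measurable_pi_apply _).neg
  refine ⟨hmeas, ?_⟩
  refine (Measure.pi_eq (μ := fun _ : Fin k => μ) fun s hs => ?_).symm
  rw [Measure.map_apply hmeas (MeasurableSet.univ_pi hs)]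
  have hpre : (fun (v : Fin k → ℝ) (j : Fin k) => -(v j.rev)) ⁻¹' Set.pi Set.univ s =
      Set.pi Set.univ fun j : Fin k => (fun x : ℝ => -x) ⁻¹' s j.rev := by
    ext v
    simp only [Set.mem_preimage, Set.mem_pi, Set.mem_univ, forall_true_left]
    constructor
    · intro H j
      have := H j.rev
      rwa [Fin.rev_rev] at this
    · intro H j
      simpa [Fin.rev_rev] using H j.rev
  rw [hpre, Measure.pi_pi]
  have hμ : ∀ t : Set ℝ, MeasurableSet t → μ ((fun x : ℝ => -x) ⁻¹' t) = μ t := by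
    intro t ht
    conv_rhs => rw [← hsym]
    rw [Measure.map_apply measurable_neg ht]
  calc (∏ j : Fin k, μ ((fun x : ℝ => -x) ⁻¹' s j.rev)) = ∏ j : Fin k, μ (s j.rev) :=
        Finset.prod_congr rfl fun j _ => hμ _ (hs _)
    _ = ∏ j : Fin k, μ (s j) := Fintype.prod_equiv (Fin.revPerm) _ _ (fun j => rfl)

lemma Qm_duality (μ : Measure ℝ) [IsProbabilityMeasure μ]
    (hcont : ∀ x : ℝ, μ {x} = 0) (hsym : μ.map (fun x => -x) = μ)
    (θ : ℝ) (hθ : 0 < θ) (n : ℕ) :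
    ∑ k ∈ Finset.range (n + 1),
      Qm μ (fun j => θ ^ (j + 1)) k * Qm μ (fun j => (θ⁻¹) ^ (j + 1)) (n - k) = 1 := by
  have hθne : θ ≠ 0 := ne_of_gt hθ
  set a : ℕ → ℝ := fun j => (θ⁻¹) ^ (j + 1) with ha
  have hapos : ∀ j, 0 < a j := fun j => pow_pos (inv_pos.2 hθ) _
  set π := Measure.pi fun _ : Fin n => μ with hπ
  set W : ℕ → (Fin n → ℝ) → ℝ := fun k u => ∑ j ∈ Finset.range k, a j * pext u j with hW
  have hWmeas : ∀ k, Measurable (W k) := fun k =>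
    Finset.measurable_sum _ fun j _ => ((measurable_pext j).const_mul _)
  have hWdiff : ∀ i k : ℕ, i ≤ k → ∀ u,
      W k u = W i u + ∑ j ∈ Finset.Ico i k, a j * pext u j := by
    intro i k h u
    simp only [hW, Finset.range_eq_Ico]
    rw [← Finset.sum_Ico_consecutive _ (Nat.zero_le i) h]
  set A : ℕ → Set (Fin n → ℝ) := fun k => {u | ∀ i < n + 1, i ≠ k → W k u < W i u} with hA
  set A' : ℕ → Set (Fin n → ℝ) := fun k => {u | ∀ i < n + 1, W k u ≤ W i u} with hA'
  set H : ℕ → ℕ → Set (Fin n → ℝ) :=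
    fun i k => {u | ∑ j ∈ Finset.Ico i k, a j * pext u j = 0} with hH
  -- each hyperplane is null
  have hHnull : ∀ i k : ℕ, i < k → k ≤ n → π (H i k) = 0 := by
    intro i k hik hk
    set c : Fin n → ℝ := fun j => if (j : ℕ) ∈ Finset.Ico i k then a j else 0 with hc
    have hce : ∀ u, ∑ j ∈ Finset.Ico i k, a j * pext u j = ∑ j : Fin n, c j * u j := by
      intro u
      rw [sum_pext_eq a u (Finset.Ico i k) (fun j hj => by simp at hj; omega)]
      refine Finset.sum_congr rfl fun j _ => ?_
      by_cases hj : (j : ℕ) ∈ Finset.Ico i k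
      · have hj' : i ≤ (j:ℕ) ∧ (j:ℕ) < k := by simpa using hj
        simp [hc, hj, hj'.1, hj'.2]
      · have hj' : ¬(i ≤ (j:ℕ) ∧ (j:ℕ) < k) := by simpa using hj
        simp [hc, hj, hj']
    have hset : H i k = {u | ∑ j : Fin n, c j * u j = 0} := by
      ext u; simp only [hH, Set.mem_setOf_eq, hce]
    rw [hset]
    refine pi_hyperplane_null μ hcont c ⟨i, by omega⟩ ?_ 0
    have : ((⟨i, by omega⟩ : Fin n) : ℕ) ∈ Finset.Ico i k := by simp [hik]
    simp only [hc, this, if_true]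
    exact ne_of_gt (hapos i)
  set N : Set (Fin n → ℝ) := ⋃ (i : ℕ) (k : ℕ) (_ : i < k) (_ : k ≤ n), H i k with hNdef
  have hN : π N = 0 := by
    refine measure_iUnion_null fun i => measure_iUnion_null fun k =>
      measure_iUnion_null fun hik => measure_iUnion_null fun hk => hHnull i k hik hk
  have hWne : ∀ u, u ∉ N → ∀ i k : ℕ, i < k → k ≤ n → W i u ≠ W k u := by
    intro u hu i k hik hk heq
    apply hu
    refine Set.mem_iUnion.2 ⟨i, Set.mem_iUnion.2 ⟨k, Set.mem_iUnion.2 ⟨hik,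
      Set.mem_iUnion.2 ⟨hk, ?_⟩⟩⟩⟩
    have hd := hWdiff i k hik.le u
    simp only [hH, Set.mem_setOf_eq]
    linarith
  have hWne' : ∀ u, u ∉ N → ∀ i k : ℕ, i ≤ n → k ≤ n → i ≠ k → W k u ≠ W i u := by
    intro u hu i k hi hk hne
    rcases lt_or_gt_of_ne hne with h | h
    · exact (hWne u hu i k h hk).symm
    · exact hWne u hu k i h hi
  have hcover : Set.univ ⊆ (⋃ k ∈ Finset.range (n + 1), A k) ∪ N := by
    intro u _
    by_cases hu : u ∈ N
    · exact Or.inr hu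
    left
    obtain ⟨k, hk, hmin⟩ := Finset.exists_min_image (Finset.range (n + 1))
      (fun k => W k u) ⟨0, by simp⟩
    refine Set.mem_biUnion hk fun i hi hne => ?_
    exact lt_of_le_of_ne (hmin i (Finset.mem_range.2 hi))
      (hWne' u hu i k (by omega) (by simpa [Nat.lt_succ_iff] using hk) hne)
  have hAmeas : ∀ k, MeasurableSet (A k) := by
    intro k
    have : A k = ⋂ (i : ℕ), ⋂ (_ : i < n + 1), ⋂ (_ : i ≠ k), {u | W k u < W i u} := by
      ext u; simp [hA]
    rw [this]
    exact MeasurableSet.iInter fun i => MeasurableSet.iInter fun _ =>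
      MeasurableSet.iInter fun _ => measurableSet_lt (hWmeas k) (hWmeas i)
  have hA'meas : ∀ k, MeasurableSet (A' k) := by
    intro k
    have : A' k = ⋂ (i : ℕ), ⋂ (_ : i < n + 1), {u | W k u ≤ W i u} := by
      ext u; simp [hA']
    rw [this]
    exact MeasurableSet.iInter fun i => MeasurableSet.iInter fun _ =>
      measurableSet_le (hWmeas k) (hWmeas i)
  have hdisj : (↑(Finset.range (n + 1)) : Set ℕ).PairwiseDisjoint A := by
    intro k hk k' hk' hne
    simp only [Finset.coe_range, Set.mem_Iio] at hk hk'
    refine Set.disjoint_left.2 fun u huk huk' => ?_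
    have h1 := huk k' hk' (Ne.symm hne)
    have h2 := huk' k hk hne
    exact absurd (h1.trans h2) (lt_irrefl _)
  have hsum1 : ∑ k ∈ Finset.range (n + 1), π (A k) = 1 := by
    rw [← measure_biUnion_finset hdisj (fun k _ => hAmeas k)]
    refine le_antisymm prob_le_one ?_
    calc (1 : ENNReal) = π Set.univ := measure_univ.symm
      _ ≤ π ((⋃ k ∈ Finset.range (n + 1), A k) ∪ N) := measure_mono hcover
      _ ≤ π (⋃ k ∈ Finset.range (n + 1), A k) + π N := measure_union_le _ _
      _ = π (⋃ k ∈ Finset.range (n + 1), A k) := by rw [hN, add_zero]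
  -- A k and A' k have the same measure
  have hAA' : ∀ k ≤ n, π (A k) = π (A' k) := by
    intro k hk
    have hsub1 : A k ⊆ A' k := by
      intro u hu i hi
      by_cases h : i = k
      · subst h; exact le_refl _
      · exact (hu i hi h).le
    have hsub2 : A' k ⊆ A k ∪ N := by
      intro u hu
      by_cases hN' : u ∈ N
      · exact Or.inr hN'
      left
      intro i hi hne
      exact lt_of_le_of_ne (hu i hi)
        (hWne' u hN' i k (by omega) hk hne)
    refine le_antisymm (measure_mono hsub1) ?_
    calc π (A' k) ≤ π (A k ∪ N) := measure_mono hsub2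
      _ ≤ π (A k) + π N := measure_union_le _ _
      _ = π (A k) := by rw [hN, add_zero]
  -- factorization of A' k
  have hfact : ∀ k ≤ n,
      π (A' k) = Qm μ (fun j => θ ^ (j + 1)) k * Qm μ (fun j => (θ⁻¹) ^ (j + 1)) (n - k) := by
    intro k hk
    obtain ⟨m, hkm⟩ : ∃ m, k + m = n := ⟨n - k, by omega⟩
    set B : Set (Fin k → ℝ) :=
      {w | ∀ i < k, ∑ j ∈ Finset.Ico i k, a j * pext w j ≤ 0} with hB
    set C : Set (Fin m → ℝ) :=
      {v | ∀ i < m, 0 ≤ ∑ j ∈ Finset.range (i + 1), a (k + j) * pext v j} with hC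
    have hBmeas : MeasurableSet B := by
      have : B = ⋂ (i : ℕ), ⋂ (_ : i < k),
          {w : Fin k → ℝ | ∑ j ∈ Finset.Ico i k, a j * pext w j ≤ 0} := by
        ext w; simp [hB]
      rw [this]
      exact MeasurableSet.iInter fun i => MeasurableSet.iInter fun _ =>
        measurableSet_le (Finset.measurable_sum _ fun j _ =>
          ((measurable_pext j).const_mul _)) measurable_const
    have hCmeas : MeasurableSet C := by
      have : C = ⋂ (i : ℕ), ⋂ (_ : i < m),
          {v : Fin m → ℝ | 0 ≤ ∑ j ∈ Finset.range (i + 1), a (k + j) * pext v j} := by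
        ext v; simp [hC]
      rw [this]
      exact MeasurableSet.iInter fun i => MeasurableSet.iInter fun _ =>
        measurableSet_le measurable_const (Finset.measurable_sum _ fun j _ =>
          ((measurable_pext j).const_mul _))
    have mp := measurePreserving_finSplit μ hkm
    set φ : (Fin k → ℝ) × (Fin m → ℝ) → (Fin n → ℝ) :=
      fun p j => if h : (j : ℕ) < k then p.1 ⟨j, h⟩ else p.2 ⟨(j : ℕ) - k, by omega⟩ with hφ
    -- preimage identification
    have hext1 : ∀ (w : Fin k → ℝ) (v : Fin m → ℝ) (j : ℕ), j < k →
        pext (φ (w, v)) j = pext w j := by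
      intro w v j hj
      rw [pext_lt _ (show j < n by omega), pext_lt _ hj]
      simp only [hφ]
      rw [dif_pos hj]
    have hext2 : ∀ (w : Fin k → ℝ) (v : Fin m → ℝ) (j : ℕ), k ≤ j → j < n →
        pext (φ (w, v)) j = pext v (j - k) := by
      intro w v j hj1 hj2
      rw [pext_lt _ hj2, pext_lt _ (show j - k < m by omega)]
      simp only [hφ]
      rw [dif_neg (by omega)]
    have hpre : φ ⁻¹' (A' k) = B ×ˢ C := by
      ext ⟨w, v⟩
      simp only [Set.mem_preimage, hA', Set.mem_setOf_eq, Set.mem_prod, hB, hC]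
      constructor
      · intro Hyp
        constructor
        · intro i hi
          have h1 := Hyp i (by omega)
          rw [hWdiff i k (by omega) _] at h1
          have h2 : ∑ j ∈ Finset.Ico i k, a j * pext (φ (w, v)) j ≤ 0 := by linarith
          calc ∑ j ∈ Finset.Ico i k, a j * pext w j
              = ∑ j ∈ Finset.Ico i k, a j * pext (φ (w, v)) j := by
                refine Finset.sum_congr rfl fun j hj => ?_
                rw [hext1 w v j (by simp at hj; omega)]
            _ ≤ 0 := h2
        · intro i hi
          have h1 := Hyp (k + i + 1) (show k + i + 1 < n + 1 by omega)
          rw [hWdiff k (k + i + 1) (by omega) _] at h1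
          have h2 : 0 ≤ ∑ j ∈ Finset.Ico k (k + i + 1), a j * pext (φ (w, v)) j := by linarith
          calc (0:ℝ) ≤ ∑ j ∈ Finset.Ico k (k + i + 1), a j * pext (φ (w, v)) j := h2
            _ = ∑ j ∈ Finset.range (i + 1), a (k + j) * pext (φ (w, v)) (k + j) := by
                have hkk : k + i + 1 - k = i + 1 := by omega
                rw [Finset.sum_Ico_eq_sum_range, hkk]
            _ = ∑ j ∈ Finset.range (i + 1), a (k + j) * pext v j := by
                refine Finset.sum_congr rfl fun j hj => ?_
                rw [hext2 w v (k + j) (by omega) (by simp at hj; omega)]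
                congr 2; omega
      · rintro ⟨H1, H2⟩ i hi
        rcases le_or_gt i k with h | h
        · rcases eq_or_lt_of_le h with rfl | h'
          · exact le_refl _
          rw [hWdiff i k h _]
          have := H1 i h'
          have he : ∑ j ∈ Finset.Ico i k, a j * pext (φ (w, v)) j
              = ∑ j ∈ Finset.Ico i k, a j * pext w j := by
            refine Finset.sum_congr rfl fun j hj => by rw [hext1 w v j (by simp at hj; omega)]
          linarith [he ▸ this]
        · rw [hWdiff k i h.le _]
          have h2 := H2 (i - k - 1) (by omega)
          have he : ∑ j ∈ Finset.Ico k i, a j * pext (φ (w, v)) j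
              = ∑ j ∈ Finset.range (i - k), a (k + j) * pext v j := by
            rw [Finset.sum_Ico_eq_sum_range]
            refine Finset.sum_congr rfl fun j hj => ?_
            rw [hext2 w v (k + j) (by omega) (by simp at hj; omega)]
            congr 2; omega
          have hik : i - k = (i - k - 1) + 1 := by omega
          rw [hik] at he
          linarith [he ▸ h2]
    have hπA' : π (A' k) = ((Measure.pi fun _ : Fin k => μ) B) *
        ((Measure.pi fun _ : Fin m => μ) C) := by
      rw [← mp.measure_preimage (hA'meas k).nullMeasurableSet, hpre, Measure.prod_prod]
    -- backward part: measure of B equals Qm with weights θ^(j+1)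
    have hBQ : (Measure.pi fun _ : Fin k => μ) B = Qm μ (fun j => θ ^ (j + 1)) k := by
      have mpr := measurePreserving_negRev μ hsym k
      have hpre2 : (fun (v : Fin k → ℝ) (j : Fin k) => -(v j.rev)) ⁻¹' B
          = {v : Fin k → ℝ | ∀ i < k,
              0 ≤ ∑ j ∈ Finset.range (i + 1), θ ^ (j + 1) * pext v j} := by
        ext v
        simp only [Set.mem_preimage, hB, Set.mem_setOf_eq]
        have hext3 : ∀ j : ℕ, j < k →
            pext (fun j : Fin k => -(v j.rev)) j = -(pext v (k - 1 - j)) := by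
          intro j hj
          rw [pext_lt _ hj, pext_lt _ (show k - 1 - j < k by omega)]
          congr 2
          simp [Fin.rev]
          omega
        have key : ∀ i, i < k →
            ((∑ j ∈ Finset.Ico i k, a j * pext (fun j : Fin k => -(v j.rev)) j ≤ 0) ↔
            (0 ≤ ∑ j ∈ Finset.range (k - i), θ ^ (j + 1) * pext v j)) := by
          intro i hi
          have e1 : ∑ j ∈ Finset.Ico i k, a j * pext (fun j : Fin k => -(v j.rev)) j
              = -∑ j ∈ Finset.Ico i k, a j * pext v (k - 1 - j) := by
            rw [← Finset.sum_neg_distrib]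
            refine Finset.sum_congr rfl fun j hj => ?_
            rw [hext3 j (by simp at hj; omega)]
            ring
          have e2 : ∑ j ∈ Finset.Ico i k, a j * pext v (k - 1 - j)
              = ∑ j ∈ Finset.range (k - i), a (k - 1 - j) * pext v j := by
            rw [Finset.sum_Ico_eq_sum_range]
            rw [← Finset.sum_range_reflect (fun j => a (i + j) * pext v (k - 1 - (i + j))) (k - i)]
            refine Finset.sum_congr rfl fun j hj => ?_
            simp only [Finset.mem_range] at hj
            congr 2 <;> omega
          have e3 : ∑ j ∈ Finset.range (k - i), a (k - 1 - j) * pext v j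
              = (θ⁻¹) ^ (k + 1) * ∑ j ∈ Finset.range (k - i), θ ^ (j + 1) * pext v j := by
            rw [Finset.mul_sum]
            refine Finset.sum_congr rfl fun j hj => ?_
            simp only [Finset.mem_range] at hj
            have hje : a (k - 1 - j) = (θ⁻¹) ^ (k - j) := by
              simp only [ha]; congr 1; omega
            rw [hje, ← coef_eq hθ (show j ≤ k by omega), mul_assoc]
          rw [e1, e2, e3, neg_nonpos,
            mul_nonneg_iff_of_pos_left (pow_pos (inv_pos.2 hθ) _)]
        constructor
        · intro Hyp i hi
          have := (key (k - 1 - i) (by omega)).1 (Hyp (k - 1 - i) (by omega))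
          have hki : k - (k - 1 - i) = i + 1 := by omega
          rwa [hki] at this
        · intro Hyp i hi
          refine (key i hi).2 ?_
          have := Hyp (k - i - 1) (by omega)
          have hki : (k - i - 1) + 1 = k - i := by omega
          rwa [hki] at this
      rw [← mpr.measure_preimage hBmeas.nullMeasurableSet, hpre2]
      rfl
    -- forward part: C is exactly the Qm set
    have hCQ : (Measure.pi fun _ : Fin m => μ) C = Qm μ (fun j => (θ⁻¹) ^ (j + 1)) m := by
      have : C = {v : Fin m → ℝ | ∀ i < m,
          0 ≤ ∑ j ∈ Finset.range (i + 1), (θ⁻¹) ^ (j + 1) * pext v j} := by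
        ext v
        simp only [hC, Set.mem_setOf_eq]
        refine forall_congr' fun i => ?_
        refine imp_congr_right fun hi => ?_
        have e1 : ∑ j ∈ Finset.range (i + 1), a (k + j) * pext v j
            = (θ⁻¹) ^ k * ∑ j ∈ Finset.range (i + 1), (θ⁻¹) ^ (j + 1) * pext v j := by
          rw [Finset.mul_sum]
          refine Finset.sum_congr rfl fun j hj => ?_
          simp only [ha, ← mul_assoc, ← pow_add]
          congr 2
        rw [e1, mul_nonneg_iff_of_pos_left (pow_pos (inv_pos.2 hθ) _)]
      rw [this]
      rfl
    have hnk : n - k = m := by omega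
    rw [hπA', hBQ, hCQ, hnk]
  calc ∑ k ∈ Finset.range (n + 1),
      Qm μ (fun j => θ ^ (j + 1)) k * Qm μ (fun j => (θ⁻¹) ^ (j + 1)) (n - k)
      = ∑ k ∈ Finset.range (n + 1), π (A k) := by
        refine Finset.sum_congr rfl fun k hk => ?_
        have hkn : k ≤ n := by simpa [Nat.lt_succ_iff] using hk
        rw [hAA' k hkn, hfact k hkn]
    _ = 1 := hsum1

end PersistenceAux

theorem persistence_duality_pos_drift (μ : Measure ℝ) [IsProbabilityMeasure μ]
    (hcont : ∀ x : ℝ, μ {x} = 0) (hsym : μ.map (fun x => -x) = μ)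
    (θ : ℝ) (hθ : 0 < θ) :
    (∀ n : ℕ, ∑ k ∈ Finset.range (n + 1), persist μ θ k * persist μ θ⁻¹ (n - k) = 1) ∧
    ∀ z : ℝ, |z| < 1 →
      (∑' n : ℕ, persist μ θ n * z ^ n) * (∑' n : ℕ, persist μ θ⁻¹ n * z ^ n)
        = 1 / (1 - z) := by
  have hθ' : 0 < θ⁻¹ := inv_pos.2 hθ
  have hp1 : ∀ k, persist μ θ k = (Qm μ (fun j => (θ⁻¹) ^ (j + 1)) k).toReal :=
    fun k => persist_eq_Qm μ θ hθ k
  have hp2 : ∀ k, persist μ θ⁻¹ k = (Qm μ (fun j => θ ^ (j + 1)) k).toReal := by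
    intro k
    have h := persist_eq_Qm μ θ⁻¹ hθ' k
    rw [inv_inv] at h
    exact h
  have key : ∀ n : ℕ, ∑ k ∈ Finset.range (n + 1),
      persist μ θ k * persist μ θ⁻¹ (n - k) = 1 := by
    intro n
    have hd := Qm_duality μ hcont hsym θ hθ n
    calc ∑ k ∈ Finset.range (n + 1), persist μ θ k * persist μ θ⁻¹ (n - k)
        = ∑ k ∈ Finset.range (n + 1), persist μ θ⁻¹ k * persist μ θ (n - k) := by
          conv_lhs => rw [← Finset.sum_range_reflect]
          refine Finset.sum_congr rfl fun k hk => ?_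
          simp only [Finset.mem_range] at hk
          have h1 : n + 1 - 1 - k = n - k := by omega
          have h2 : n - (n - k) = k := by omega
          rw [h1, h2, mul_comm]
      _ = ∑ k ∈ Finset.range (n + 1),
            ((Qm μ (fun j => θ ^ (j + 1)) k) *
              (Qm μ (fun j => (θ⁻¹) ^ (j + 1)) (n - k))).toReal := by
          refine Finset.sum_congr rfl fun k _ => ?_
          rw [hp2, hp1, ENNReal.toReal_mul]
      _ = (∑ k ∈ Finset.range (n + 1),
            (Qm μ (fun j => θ ^ (j + 1)) k) *
              (Qm μ (fun j => (θ⁻¹) ^ (j + 1)) (n - k))).toReal := by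
          rw [ENNReal.toReal_sum]
          intro k _
          exact ENNReal.mul_ne_top (measure_ne_top _ _) (measure_ne_top _ _)
      _ = 1 := by rw [hd]; simp
  refine ⟨key, fun z hz => ?_⟩
  have hnn : ∀ (θ' : ℝ) (k : ℕ), 0 ≤ persist μ θ' k := fun θ' k => ENNReal.toReal_nonneg
  have hle1 : ∀ (θ' : ℝ) (k : ℕ), persist μ θ' k ≤ 1 := by
    intro θ' k
    unfold persist
    rw [← ENNReal.toReal_one]
    exact ENNReal.toReal_mono ENNReal.one_ne_top prob_le_one
  have hsumm : ∀ (θ' : ℝ), Summable fun n : ℕ => ‖persist μ θ' n * z ^ n‖ := by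
    intro θ'
    refine Summable.of_nonneg_of_le (fun n => norm_nonneg _) (fun n => ?_)
      (summable_geometric_of_lt_one (abs_nonneg z) hz)
    rw [norm_mul, norm_pow, Real.norm_eq_abs, Real.norm_eq_abs,
      abs_of_nonneg (hnn θ' n)]
    calc persist μ θ' n * |z| ^ n ≤ 1 * |z| ^ n := by
          gcongr; exact hle1 θ' n
      _ = |z| ^ n := one_mul _
  rw [tsum_mul_tsum_eq_tsum_sum_range_of_summable_norm (hsumm θ) (hsumm θ⁻¹)]
  have hterm : ∀ n : ℕ, ∑ k ∈ Finset.range (n + 1),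
      (persist μ θ k * z ^ k) * (persist μ θ⁻¹ (n - k) * z ^ (n - k)) = z ^ n := by
    intro n
    calc ∑ k ∈ Finset.range (n + 1),
        (persist μ θ k * z ^ k) * (persist μ θ⁻¹ (n - k) * z ^ (n - k))
        = ∑ k ∈ Finset.range (n + 1),
            (persist μ θ k * persist μ θ⁻¹ (n - k)) * z ^ n := by
          refine Finset.sum_congr rfl fun k hk => ?_
          simp only [Finset.mem_range] at hk
          have hzz : z ^ k * z ^ (n - k) = z ^ n := by rw [← pow_add]; congr 1; omega
          calc (persist μ θ k * z ^ k) * (persist μ θ⁻¹ (n - k) * z ^ (n - k))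
              = (persist μ θ k * persist μ θ⁻¹ (n - k)) * (z ^ k * z ^ (n - k)) := by ring
            _ = (persist μ θ k * persist μ θ⁻¹ (n - k)) * z ^ n := by rw [hzz]
      _ = (∑ k ∈ Finset.range (n + 1),
            persist μ θ k * persist μ θ⁻¹ (n - k)) * z ^ n := by
          rw [Finset.sum_mul]
      _ = z ^ n := by rw [key n, one_mul]
  rw [tsum_congr hterm, tsum_geometric_of_abs_lt_one hz, one_div]
end

section
/- With J̃_n as defined from the inverse generating function of (-1)^n J_{n+1}(θ), one has (-1)^{n-1} J̃_{n+1}(1) = (n-1)^{n-1} for every n ≥ 0 (with the convention 0^0 = 1). -/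
open Polynomial MeasureTheory

/-- The modified polynomials `J̃ n`, determined by `J̃ 1 = 1` and the formal power
series identity `∑ J̃ (n+1) z^n/n! = (∑ (-1)^n J (n+1) z^n/n!)⁻¹`, equivalently the
recursion `J̃ (n+1) = ∑_{k=1}^n (-1)^{k-1} C(n,k) J (k+1) J̃ (n+1-k)`. -/
noncomputable def MRJt : ℕ → Polynomial ℚ
  | 0 => 0
  | 1 => 1
  | n + 2 =>
      ∑ k ∈ (Finset.Icc 1 (n + 1)).attach,
        (-1 : Polynomial ℚ) ^ (k.1 - 1) * ((n + 1).choose k.1 : Polynomial ℚ) *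
          MRJ (k.1 + 1) * MRJt (n + 2 - k.1)
  decreasing_by
  have := (Finset.mem_Icc.mp k.2).1; omega


lemma alt_shift (m : ℕ) (g : ℕ → ℚ) :
    ∑ k ∈ Finset.range (m+2), (-1:ℚ)^k * ((m+1).choose k : ℚ) * g k
    = -∑ k ∈ Finset.range (m+1), (-1:ℚ)^k * (m.choose k : ℚ) * (g (k+1) - g k) := by
  have h0 : ∑ k ∈ Finset.range (m+1), (-1:ℚ)^k * (m.choose (k+1) : ℚ) * g (k+1)
      = -∑ k ∈ Finset.range (m+1), (-1:ℚ)^k * (m.choose k : ℚ) * g k + g 0 := by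
    have h1 := Finset.sum_range_succ' (fun k => (-1:ℚ)^k * (m.choose k : ℚ) * g k) (m+1)
    have h2 := Finset.sum_range_succ (fun k => (-1:ℚ)^k * (m.choose k : ℚ) * g k) (m+1)
    simp only [Nat.choose_succ_self, Nat.cast_zero, mul_zero, zero_mul, add_zero] at h2
    rw [h2] at h1
    have : ∀ k ∈ Finset.range (m+1), (-1:ℚ)^(k+1) * (m.choose (k+1) : ℚ) * g (k+1)
        = -((-1:ℚ)^k * (m.choose (k+1) : ℚ) * g (k+1)) := by intro k _; ring
    rw [Finset.sum_congr rfl this, Finset.sum_neg_distrib] at h1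
    simp only [pow_zero, Nat.choose_zero_right, Nat.cast_one, one_mul, Nat.cast_zero] at h1
    linarith [h1]
  rw [Finset.sum_range_succ' (fun k => (-1:ℚ)^k * ((m+1).choose k : ℚ) * g k) (m+1)]
  have e1 : ∀ k ∈ Finset.range (m+1), (-1:ℚ)^(k+1) * ((m+1).choose (k+1) : ℚ) * g (k+1)
      = -((-1:ℚ)^k * (m.choose k : ℚ) * g (k+1)) - (-1:ℚ)^k * (m.choose (k+1) : ℚ) * g (k+1) := by
    intro k _
    rw [Nat.choose_succ_succ]
    push_cast
    ring
  rw [Finset.sum_congr rfl e1, Finset.sum_sub_distrib, Finset.sum_neg_distrib, h0]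
  simp only [mul_sub]
  simp [Finset.sum_sub_distrib, mul_sub]
  ring

lemma findiff : ∀ (m : ℕ), ∀ j < m, ∀ x : ℚ,
    ∑ k ∈ Finset.range (m+1), (-1:ℚ)^k * (m.choose k : ℚ) * (x + k)^j = 0 := by
  intro m
  induction m with
  | zero => intro j hj; omega
  | succ m ih =>
    intro j hj x
    rw [alt_shift m (fun k => (x + k)^j)]
    have e1 : ∀ k ∈ Finset.range (m+1),
        (-1:ℚ)^k * (m.choose k : ℚ) * ((x + (k+1:ℕ))^j - (x + k)^j)
        = ∑ i ∈ Finset.range j, (j.choose i : ℚ) * ((-1:ℚ)^k * (m.choose k : ℚ) * (x + k)^i) := by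
      intro k _
      have hb : (x + ((k:ℚ)+1))^j = ∑ i ∈ Finset.range (j+1), (x + k)^i * (j.choose i : ℚ) := by
        have h := add_pow (x + (k:ℚ)) 1 j
        simp only [one_pow, mul_one] at h
        rw [← h]; ring_nf
      push_cast
      rw [hb, Finset.sum_range_succ]
      simp only [Nat.choose_self, Nat.cast_one, mul_one, add_sub_cancel_right, Finset.mul_sum]
      apply Finset.sum_congr rfl
      intro i _; ring
    rw [Finset.sum_congr rfl e1, Finset.sum_comm]
    rw [show (0:ℚ) = -0 by norm_num]
    congr 1
    apply Finset.sum_eq_zero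
    intro i hi
    have := Finset.mem_range.mp hi
    rw [← Finset.mul_sum, ih i (by omega) x, mul_zero]

lemma choose_absorb (n k : ℕ) : (n+1-k) * ((n+1).choose k) = (n+1) * (n.choose k) := by
  rw [mul_comm, ← Nat.choose_mul_succ_eq, mul_comm]

lemma abel : ∀ (n : ℕ) (x y : ℚ),
    (y + n)^n + ∑ k ∈ Finset.Icc 1 n,
      (n.choose k : ℚ) * x * (x + k)^(k-1) * (y + n - k)^(n-k) = (x + y + n)^n := by
  intro n
  induction n with
  | zero => intro x y; simp
  | succ n ih =>
    intro x y
    set G : Polynomial ℚ :=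
      (X + C ((n:ℚ)+1))^(n+1)
      + ∑ k ∈ Finset.Icc 1 (n+1),
          C (((n+1).choose k : ℚ) * x * (x + k)^(k-1)) * (X + C ((n:ℚ)+1-(k:ℚ)))^(n+1-k)
      - (X + C (x + n + 1))^(n+1) with hG
    have heval : ∀ z : ℚ, G.eval z =
        (z + ((n:ℚ)+1))^(n+1) + ∑ k ∈ Finset.Icc 1 (n+1),
          ((n+1).choose k : ℚ) * x * (x + k)^(k-1) * (z + ((n:ℚ)+1) - k)^(n+1-k)
        - (x + z + ((n:ℚ)+1))^(n+1) := by
      intro z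
      simp only [hG, eval_sub, eval_add, eval_pow, eval_X, eval_C, eval_finset_sum, eval_mul]
      have : ∀ k ∈ Finset.Icc 1 (n+1),
          (((n + 1).choose k : ℚ) * x * (x + (k:ℚ)) ^ (k - 1)) * (z + ((n:ℚ) + 1 - (k:ℚ))) ^ (n + 1 - k)
          = ((n + 1).choose k : ℚ) * x * (x + (k:ℚ)) ^ (k - 1) * (z + ((n:ℚ) + 1) - (k:ℚ)) ^ (n + 1 - k) := by
        intro k _; ring_nf
      rw [Finset.sum_congr rfl this]
      ring
    have hderiv : ∀ z : ℚ, (derivative G).eval z = 0 := by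
      intro z
      simp only [hG, derivative_sub, derivative_add, derivative_sum, derivative_mul,
        derivative_C, derivative_X_add_C_pow, zero_mul, zero_add]
      simp only [eval_sub, eval_add, eval_mul, eval_pow, eval_X, eval_C, eval_finset_sum,
        eval_natCast]
      have hsplit : Finset.Icc 1 (n+1) = insert (n+1) (Finset.Icc 1 n) := by
        ext a; simp only [Finset.mem_Icc, Finset.mem_insert]; omega
      rw [hsplit, Finset.sum_insert (by simp)]
      simp only [Nat.sub_self, Nat.cast_zero, mul_zero, zero_mul, zero_add, add_zero]
      have hterm : ∀ k ∈ Finset.Icc 1 n,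
          (((n+1).choose k : ℚ) * x * (x + (k:ℚ))^(k-1)) * (((n+1-k : ℕ) : ℚ) * (z + ((n:ℚ)+1-(k:ℚ)))^(n+1-k-1))
          = ((n:ℚ)+1) * ((n.choose k : ℚ) * x * (x + (k:ℚ))^(k-1) * (z + 1 + (n:ℚ) - (k:ℚ))^(n-k)) := by
        intro k hk
        obtain ⟨hk1, hk2⟩ := Finset.mem_Icc.mp hk
        have e1 : n + 1 - k - 1 = n - k := by omega
        have e2 : ((n+1-k : ℕ) : ℚ) * (((n+1).choose k : ℚ)) = ((n:ℚ)+1) * (n.choose k : ℚ) := by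
          have h := choose_absorb n k
          have : (((n+1-k) * ((n+1).choose k) : ℕ) : ℚ) = (((n+1) * (n.choose k) : ℕ) : ℚ) := by
            exact_mod_cast congrArg (Nat.cast (R := ℚ)) h
          push_cast at this
          linarith [this]
        have e3 : z + ((n:ℚ)+1-(k:ℚ)) = z + 1 + (n:ℚ) - (k:ℚ) := by ring
        rw [e1, e3]
        linear_combination (x * (x + (k:ℚ))^(k-1) * (z + 1 + (n:ℚ) - (k:ℚ))^(n-k)) * e2
      rw [Finset.sum_congr rfl hterm, ← Finset.mul_sum]
      have hsum : ∑ k ∈ Finset.Icc 1 n,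
          (n.choose k : ℚ) * x * (x + (k:ℚ))^(k-1) * (z + 1 + (n:ℚ) - (k:ℚ))^(n-k)
          = (x + (z+1) + (n:ℚ))^n - ((z+1) + (n:ℚ))^n := by
        have h := ih x (z+1)
        have : ∀ k ∈ Finset.Icc 1 n,
            (n.choose k : ℚ) * x * (x + (k:ℚ))^(k-1) * ((z+1) + (n:ℚ) - (k:ℚ))^(n-k)
            = (n.choose k : ℚ) * x * (x + (k:ℚ))^(k-1) * (z + 1 + (n:ℚ) - (k:ℚ))^(n-k) := by
          intro k _; ring_nf
        rw [Finset.sum_congr rfl this] at h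
        linarith [h]
      rw [hsum]
      push_cast
      ring
    have hd0 : derivative G = 0 := Polynomial.funext (fun r => by rw [hderiv r, eval_zero])
    have hc : G = C (G.coeff 0) :=
      eq_C_of_natDegree_eq_zero (natDegree_eq_zero_of_derivative_eq_zero hd0)
    have hroot : G.eval (-x - ((n:ℚ)+1)) = 0 := by
      rw [heval]
      have e0 : (-x - ((n:ℚ)+1) + ((n:ℚ)+1)) = -x := by ring
      have e00 : (x + (-x - ((n:ℚ)+1)) + ((n:ℚ)+1)) = 0 := by ring
      rw [e0, e00, zero_pow (by omega : n + 1 ≠ 0)]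
      have hterm : ∀ k ∈ Finset.Icc 1 (n+1),
          ((n+1).choose k : ℚ) * x * (x + (k:ℚ))^(k-1) * (-x - (k:ℚ))^(n+1-k)
          = ((-1:ℚ)^(n+1) * (-1:ℚ)^k) * (((n+1).choose k : ℚ) * (x + (k:ℚ))^n) * x := by
        intro k hk
        obtain ⟨hk1, hk2⟩ := Finset.mem_Icc.mp hk
        have e1 : (-x - (k:ℚ)) = -(x + (k:ℚ)) := by ring
        rw [e1, neg_pow]
        have e2 : (x + (k:ℚ))^(k-1) * (x + (k:ℚ))^(n+1-k) = (x + (k:ℚ))^n := by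
          rw [← pow_add]; congr 1; omega
        have e3 : (-1:ℚ)^(n+1-k) = (-1:ℚ)^(n+1) * (-1:ℚ)^k := by
          have h1 : (-1:ℚ)^(n+1-k) * ((-1:ℚ)^k * (-1:ℚ)^k) = (-1:ℚ)^(n+1) * (-1:ℚ)^k := by
            rw [← mul_assoc, ← pow_add, show n+1-k+k = n+1 by omega]
          have h2 : (-1:ℚ)^k * (-1:ℚ)^k = 1 := by
            rw [← pow_add]
            exact Even.neg_one_pow ⟨k, rfl⟩
          rw [h2, mul_one] at h1
          exact h1
        calc ((n+1).choose k : ℚ) * x * (x + (k:ℚ))^(k-1) * ((-1:ℚ)^(n+1-k) * (x + (k:ℚ))^(n+1-k))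
            = (-1:ℚ)^(n+1-k) * (((n+1).choose k : ℚ) * ((x + (k:ℚ))^(k-1) * (x + (k:ℚ))^(n+1-k))) * x := by ring
          _ = ((-1:ℚ)^(n+1) * (-1:ℚ)^k) * (((n+1).choose k : ℚ) * (x + (k:ℚ))^n) * x := by rw [e2, e3]
      rw [Finset.sum_congr rfl hterm]
      have hfd := findiff (n+1) n (by omega) x
      have hins : Finset.range (n+2) = insert 0 (Finset.Icc 1 (n+1)) := by
        ext a; simp only [Finset.mem_range, Finset.mem_insert, Finset.mem_Icc]; omega
      rw [hins, Finset.sum_insert (by simp)] at hfd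
      simp only [pow_zero, Nat.choose_zero_right, Nat.cast_one, Nat.cast_zero, one_mul, mul_one,
        add_zero] at hfd
      -- hfd : x^n + ∑ k ∈ Icc 1 (n+1), (-1)^k * C(n+1,k) * (x+k)^n = 0
      have hsum2 : ∑ k ∈ Finset.Icc 1 (n+1),
          ((-1:ℚ)^(n+1) * (-1:ℚ)^k) * (((n+1).choose k : ℚ) * (x + (k:ℚ))^n) * x
          = (-1:ℚ)^(n+1) * x * ∑ k ∈ Finset.Icc 1 (n+1),
              (-1:ℚ)^k * (((n+1).choose k : ℚ)) * (x + (k:ℚ))^n := by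
        rw [Finset.mul_sum]
        apply Finset.sum_congr rfl
        intro k _; ring
      rw [hsum2]
      have hin : ∑ k ∈ Finset.Icc 1 (n+1),
          (-1:ℚ)^k * (((n+1).choose k : ℚ)) * (x + (k:ℚ))^n = -x^n := by linarith [hfd]
      rw [hin, neg_pow]
      ring
    have hc0 : G.coeff 0 = 0 := by
      rw [hc] at hroot
      simpa using hroot
    have hGz : G = 0 := by rw [hc, hc0, map_zero]
    have := heval y
    rw [hGz, eval_zero] at this
    push_cast
    linarith [this]

lemma abel' (n : ℕ) (x y : ℚ) :
    y * (y + (n+1))^n + x * (x + (n+1))^n + ∑ k ∈ Finset.Icc 1 n,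
      ((n+1).choose k : ℚ) * x * (x + k)^(k-1) * y * (y + (n+1) - k)^(n-k)
    = (x + y) * (x + y + (n+1))^n := by
  have hA := abel (n+1) x y
  have hB := abel n x (y+1)
  -- rewrite the (n+1) sum
  have hsplit : Finset.Icc 1 (n+1) = insert (n+1) (Finset.Icc 1 n) := by
    ext a; simp only [Finset.mem_Icc, Finset.mem_insert]; omega
  rw [hsplit, Finset.sum_insert (by simp)] at hA
  push_cast at hA hB ⊢
  have hins : (((n+1).choose (n+1) : ℚ)) * x * (x + ((n:ℚ)+1))^n * (y + ((n:ℚ)+1) - ((n:ℚ)+1))^(n-n) = x * (x + ((n:ℚ)+1))^n := by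
    simp [Nat.choose_self, Nat.sub_self]
  rw [hins] at hA
  -- split each remaining term of hA
  have hterm : ∀ k ∈ Finset.Icc 1 n,
      ((n+1).choose k : ℚ) * x * (x + (k:ℚ))^(k-1) * (y + ((n:ℚ)+1) - (k:ℚ))^(n+1-k)
      = ((n+1).choose k : ℚ) * x * (x + (k:ℚ))^(k-1) * y * (y + ((n:ℚ)+1) - (k:ℚ))^(n-k)
        + ((n:ℚ)+1) * ((n.choose k : ℚ) * x * (x + (k:ℚ))^(k-1) * ((y+1) + (n:ℚ) - (k:ℚ))^(n-k)) := by
    intro k hk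
    obtain ⟨hk1, hk2⟩ := Finset.mem_Icc.mp hk
    have e1 : n + 1 - k = (n - k) + 1 := by omega
    have e2 : (y + ((n:ℚ)+1) - (k:ℚ))^(n+1-k)
        = (y + ((n:ℚ)+1) - (k:ℚ))^(n-k) * (y + ((n:ℚ)+1) - (k:ℚ)) := by
      rw [e1, pow_succ]
    have e4 : ((n+1-k : ℕ) : ℚ) * (((n+1).choose k : ℚ)) = ((n:ℚ)+1) * (n.choose k : ℚ) := by
      have h := choose_absorb n k
      have h2 : (((n+1-k) * ((n+1).choose k) : ℕ) : ℚ) = (((n+1) * (n.choose k) : ℕ) : ℚ) := by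
        exact_mod_cast congrArg (Nat.cast (R := ℚ)) h
      push_cast at h2
      linarith [h2]
    have e5 : ((n+1-k : ℕ) : ℚ) = (n:ℚ) + 1 - (k:ℚ) := by
      push_cast [Nat.cast_sub (by omega : k ≤ n+1)]; ring
    rw [e2]
    have e6 : (y+1) + (n:ℚ) - (k:ℚ) = y + ((n:ℚ)+1) - (k:ℚ) := by ring
    rw [e6]
    rw [e5] at e4
    linear_combination (x * (x + (k:ℚ))^(k-1) * (y + ((n:ℚ)+1) - (k:ℚ))^(n-k)) * e4
  rw [Finset.sum_congr rfl hterm, Finset.sum_add_distrib, ← Finset.mul_sum] at hA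
  -- also massage hB's bases
  have hB' : ∑ k ∈ Finset.Icc 1 n, (n.choose k : ℚ) * x * (x + (k:ℚ))^(k-1) * ((y+1) + (n:ℚ) - (k:ℚ))^(n-k)
      = (x + (y+1) + (n:ℚ))^n - ((y+1) + (n:ℚ))^n := by
    have : ∀ k ∈ Finset.Icc 1 n,
        (n.choose k : ℚ) * x * (x + (k:ℚ))^(k-1) * (y + 1 + (n:ℚ) - (k:ℚ))^(n-k)
        = (n.choose k : ℚ) * x * (x + (k:ℚ))^(k-1) * ((y+1) + (n:ℚ) - (k:ℚ))^(n-k) := by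
      intro k _; ring_nf
    rw [Finset.sum_congr rfl this] at hB
    linarith [hB]
  rw [hB'] at hA
  have expand1 : (y + ((n:ℚ)+1))^(n+1) = y * (y + ((n:ℚ)+1))^n + ((y+1) + (n:ℚ))^n * ((n:ℚ)+1) := by
    rw [pow_succ]
    have : (y+1) + (n:ℚ) = y + ((n:ℚ)+1) := by ring
    rw [this]; ring
  have expand2 : (x + y + ((n:ℚ)+1))^(n+1) = (x+y) * (x + y + ((n:ℚ)+1))^n + (x + (y+1) + (n:ℚ))^n * ((n:ℚ)+1) := by
    rw [pow_succ]
    have : x + (y+1) + (n:ℚ) = x + y + ((n:ℚ)+1) := by ring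
    rw [this]; ring
  rw [expand1, expand2] at hA
  linarith [hA]

lemma hpow (m : ℕ) : ((m:ℚ)+1) * ((m:ℚ)+1)^(m-1) = ((m:ℚ)+1)^m := by
  cases m with
  | zero => norm_num
  | succ m => rw [Nat.add_sub_cancel, ← pow_succ']

lemma idA (n : ℕ) : ∑ i ∈ Finset.range (n+1),
    (n.choose i : ℚ) * ((i:ℚ)+1) * ((i:ℚ)+1)^(i-1) * (((n-i:ℕ):ℚ)+1)^((n-i)-1)
    = ((n:ℚ)+2)^n := by
  have hA := abel n 1 1
  rw [Finset.sum_range_succ]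
  have hlast : (n.choose n : ℚ) * ((n:ℚ)+1) * ((n:ℚ)+1)^(n-1) * (((n-n:ℕ):ℚ)+1)^((n-n)-1)
      = ((n:ℚ)+1)^n := by
    rw [Nat.choose_self, Nat.sub_self]
    push_cast
    linear_combination hpow n
  rw [hlast]
  have hre : ∑ i ∈ Finset.range n,
      (n.choose i : ℚ) * ((i:ℚ)+1) * ((i:ℚ)+1)^(i-1) * (((n-i:ℕ):ℚ)+1)^((n-i)-1)
      = ∑ k ∈ Finset.Icc 1 n, (n.choose k : ℚ) * 1 * (1+(k:ℚ))^(k-1) * (1 + (n:ℚ) - (k:ℚ))^(n-k) := by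
    apply Finset.sum_nbij' (fun i => n - i) (fun k => n - k)
    · intro a ha; simp only [Finset.mem_range] at ha; simp only [Finset.mem_Icc]; omega
    · intro a ha; simp only [Finset.mem_Icc] at ha; simp only [Finset.mem_range]; omega
    · intro a ha; simp only [Finset.mem_range] at ha; omega
    · intro a ha; simp only [Finset.mem_Icc] at ha; omega
    · intro i hi
      simp only [Finset.mem_range] at hi
      have h1 : n - (n - i) = i := by omega
      have hc : n.choose (n-i) = n.choose i := Nat.choose_symm (le_of_lt hi)
      have hcast : ((n-i:ℕ):ℚ) = (n:ℚ) - (i:ℚ) := by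
        push_cast [Nat.cast_sub (le_of_lt hi)]; ring
      rw [h1, hc, hcast]
      linear_combination ((n.choose i : ℚ) * (1+((n:ℚ)-(i:ℚ)))^((n-i)-1)) * hpow i
  rw [hre]
  have e1 : ((1:ℚ)+↑n)^n = ((n:ℚ)+1)^n := by ring
  have e2 : ((1:ℚ)+1+↑n)^n = ((n:ℚ)+2)^n := by ring
  rw [e1, e2] at hA
  have : ∀ k ∈ Finset.Icc 1 n,
      (n.choose k : ℚ) * 1 * (1+(k:ℚ))^(k-1) * ((1:ℚ) + (n:ℚ) - (k:ℚ))^(n-k)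
      = (n.choose k : ℚ) * 1 * (1+(k:ℚ))^(k-1) * (1 + (n:ℚ) - (k:ℚ))^(n-k) := fun k _ => rfl
  linarith [hA]

lemma idB (n : ℕ) : ∑ k ∈ Finset.Icc 1 n,
    ((n+1).choose k : ℚ) * ((k:ℚ)+1)^(k-1) * (((n-k:ℕ):ℚ))^(n-k)
    = ((n:ℚ)+2)^n - ((n:ℚ))^n := by
  have hA := abel' n 1 (-1)
  have hterm : ∀ k ∈ Finset.Icc 1 n,
      ((n+1).choose k : ℚ) * 1 * (1+(k:ℚ))^(k-1) * (-1) * ((-1) + ((n:ℚ)+1) - (k:ℚ))^(n-k)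
      = -(((n+1).choose k : ℚ) * ((k:ℚ)+1)^(k-1) * (((n-k:ℕ):ℚ))^(n-k)) := by
    intro k hk
    obtain ⟨hk1, hk2⟩ := Finset.mem_Icc.mp hk
    have hcast : ((n-k:ℕ):ℚ) = (n:ℚ) - (k:ℚ) := by
      push_cast [Nat.cast_sub hk2]; ring
    have e : (-1) + ((n:ℚ)+1) - (k:ℚ) = ((n-k:ℕ):ℚ) := by rw [hcast]; ring
    rw [e]
    ring
  rw [Finset.sum_congr rfl hterm, Finset.sum_neg_distrib] at hA
  have e1 : ((-1:ℚ) + ((n:ℚ)+1))^n = ((n:ℚ))^n := by ring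
  have e2 : ((1:ℚ) + ((n:ℚ)+1))^n = ((n:ℚ)+2)^n := by ring
  have e3 : ((1:ℚ) + (-1)) * ((1:ℚ) + (-1) + ((n:ℚ)+1))^n = 0 := by norm_num
  rw [e1, e2, e3] at hA
  linarith [hA]

lemma cayley : ∀ n : ℕ, (MRJ (n+1)).eval 1 = ((n:ℚ)+1)^(n-1) := by
  intro n
  induction n using Nat.strong_induction_on with
  | _ n ih =>
    cases n with
    | zero => rw [MRJ]; norm_num
    | succ m =>
      rw [show m + 1 + 1 = m + 2 from rfl, MRJ, Polynomial.eval_finset_sum]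
      rw [Finset.sum_attach (Finset.range (m+1)) (fun j => Polynomial.eval 1
        ((m.choose j : Polynomial ℚ) * (∑ l ∈ Finset.range (j+1), X^l) * MRJ (j+1) * MRJ (m+1-j)))]
      have hterm : ∀ i ∈ Finset.range (m+1), Polynomial.eval 1
          ((m.choose i : Polynomial ℚ) * (∑ l ∈ Finset.range (i+1), X^l) * MRJ (i+1) * MRJ (m+1-i))
          = (m.choose i : ℚ) * ((i:ℚ)+1) * ((i:ℚ)+1)^(i-1) * (((m-i:ℕ):ℚ)+1)^((m-i)-1) := by
        intro i hi
        have him : i < m + 1 := Finset.mem_range.mp hi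
        have h1 : (MRJ (i+1)).eval 1 = ((i:ℚ)+1)^(i-1) := ih i him
        have h2 : (MRJ (m+1-i)).eval 1 = (((m-i:ℕ):ℚ)+1)^((m-i)-1) := by
          rw [show m + 1 - i = (m-i) + 1 from by omega]
          exact ih (m-i) (by omega)
        have h3 : Polynomial.eval 1 (∑ l ∈ Finset.range (i+1), (X:Polynomial ℚ)^l) = ((i:ℚ)+1) := by
          rw [Polynomial.eval_finset_sum]
          simp [Finset.sum_const, Finset.card_range]
        rw [Polynomial.eval_mul, Polynomial.eval_mul, Polynomial.eval_mul, h1, h2, h3,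
          Polynomial.eval_natCast]
      rw [Finset.sum_congr rfl hterm, idA m]
      rw [Nat.add_sub_cancel]
      push_cast
      ring

lemma mrjt_eval : ∀ n : ℕ, (MRJt (n+2)).eval 1 = (-1:ℚ)^n * ((n:ℚ))^n := by
  intro n
  induction n using Nat.strong_induction_on with
  | _ n ih =>
    rw [MRJt, Polynomial.eval_finset_sum]
    rw [Finset.sum_attach (Finset.Icc 1 (n+1)) (fun k => Polynomial.eval 1
      ((-1 : Polynomial ℚ)^(k-1) * ((n + 1).choose k : Polynomial ℚ) * MRJ (k+1) * MRJt (n+2-k)))]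
    have hsplit : Finset.Icc 1 (n+1) = insert (n+1) (Finset.Icc 1 n) := by
      ext a; simp only [Finset.mem_Icc, Finset.mem_insert]; omega
    rw [hsplit, Finset.sum_insert (by simp)]
    have hone : (MRJt 1).eval 1 = 1 := by rw [MRJt]; norm_num
    have hins : Polynomial.eval 1 ((-1 : Polynomial ℚ)^((n+1)-1) * ((n + 1).choose (n+1) : Polynomial ℚ)
        * MRJ ((n+1)+1) * MRJt (n+2-(n+1)))
        = (-1:ℚ)^n * ((n:ℚ)+2)^n := by
      rw [show n + 2 - (n+1) = 1 from by omega]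
      rw [Polynomial.eval_mul, Polynomial.eval_mul, Polynomial.eval_mul, hone, cayley (n+1)]
      simp only [Nat.add_sub_cancel, Nat.choose_self, Nat.cast_one, Polynomial.eval_pow,
        Polynomial.eval_neg, Polynomial.eval_one, Polynomial.eval_natCast, mul_one]
      push_cast
      ring
    rw [hins]
    have hterm : ∀ k ∈ Finset.Icc 1 n, Polynomial.eval 1
        ((-1 : Polynomial ℚ)^(k-1) * ((n + 1).choose k : Polynomial ℚ) * MRJ (k+1) * MRJt (n+2-k))
        = (-1:ℚ)^(n-1) * (((n+1).choose k : ℚ) * ((k:ℚ)+1)^(k-1) * (((n-k:ℕ):ℚ))^(n-k)) := by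
      intro k hk
      obtain ⟨hk1, hk2⟩ := Finset.mem_Icc.mp hk
      have h2 : (MRJt (n+2-k)).eval 1 = (-1:ℚ)^(n-k) * (((n-k:ℕ):ℚ))^(n-k) := by
        rw [show n + 2 - k = (n-k) + 2 from by omega]
        exact ih (n-k) (by omega)
      rw [Polynomial.eval_mul, Polynomial.eval_mul, Polynomial.eval_mul, h2, cayley k]
      simp only [Polynomial.eval_pow, Polynomial.eval_neg, Polynomial.eval_one,
        Polynomial.eval_natCast]
      have hs : (-1:ℚ)^(k-1) * (-1:ℚ)^(n-k) = (-1:ℚ)^(n-1) := by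
        rw [← pow_add, show k - 1 + (n-k) = n - 1 from by omega]
      calc (-1:ℚ)^(k-1) * ((n+1).choose k : ℚ) * ((k:ℚ)+1)^(k-1) * ((-1:ℚ)^(n-k) * (((n-k:ℕ):ℚ))^(n-k))
          = ((-1:ℚ)^(k-1) * (-1:ℚ)^(n-k)) * (((n+1).choose k : ℚ) * ((k:ℚ)+1)^(k-1) * (((n-k:ℕ):ℚ))^(n-k)) := by ring
        _ = (-1:ℚ)^(n-1) * (((n+1).choose k : ℚ) * ((k:ℚ)+1)^(k-1) * (((n-k:ℕ):ℚ))^(n-k)) := by rw [hs]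
    rw [Finset.sum_congr rfl hterm, ← Finset.mul_sum, idB n]
    cases n with
    | zero => norm_num
    | succ m =>
      rw [show m + 1 - 1 = m from rfl, pow_succ]
      ring

theorem MRJt_eval_one (n : ℕ) :
    (-1 : ℚ) ^ ((n : ℤ) - 1) * (MRJt (n + 1)).eval 1 = ((n : ℚ) - 1) ^ ((n : ℤ) - 1) := by
  cases n with
  | zero =>
    have hone : (MRJt 1).eval 1 = 1 := by rw [MRJt]; norm_num
    simp only [Nat.cast_zero, zero_sub, hone, mul_one, zero_add]
  | succ m =>
    have h1 : ((m+1:ℕ):ℤ) - 1 = (m:ℤ) := by push_cast; ring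
    have h2 : ((m+1:ℕ):ℚ) - 1 = (m:ℚ) := by push_cast; ring
    rw [h1, h2, zpow_natCast, zpow_natCast]
    rw [show m + 1 + 1 = m + 2 from rfl, mrjt_eval m]
    rw [← mul_assoc, ← mul_pow]
    norm_num
end

section
/- For the AR(1) process with biexponential innovations (density e^{-|x|}/2) and any θ ≤ 0, the persistence probability satisfies 2^n p_n(θ) = (1-θ)^{-(n-1)} for all n ≥ 1. -/
set_option maxHeartbeats 1000000

open Polynomial MeasureTheory

/-- The biexponential (Laplace) law, with density `e^{-|x|}/2`. -/
noncomputable def laplace : Measure ℝ :=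
  volume.withDensity fun x => ENNReal.ofReal (Real.exp (-|x|) / 2)

open Real Set
open scoped ENNReal

instance : SigmaFinite laplace := by unfold laplace; infer_instance

namespace PersistAux



variable (θ : ℝ)

/-- `Y_n` as a function of the first `n` innovations. -/
noncomputable def V (n : ℕ) (v : Fin n → ℝ) : ℝ :=
  ∑ j : Fin n, θ ^ (n - 1 - j.1) * v j

def S (n : ℕ) : Set (Fin n → ℝ) :=
  {u | ∀ k : Fin n, 0 ≤ ∑ j ∈ Finset.Iic k, θ ^ (k.1 - j.1) * u j}

lemma measurable_W {n : ℕ} (k : Fin n) :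
    Measurable fun u : Fin n → ℝ => ∑ j ∈ Finset.Iic k, θ ^ (k.1 - j.1) * u j :=
  Finset.measurable_sum _ fun j _ => (measurable_pi_apply j).const_mul _

lemma measurableSet_S (n : ℕ) : MeasurableSet (S θ n) := by
  have : S θ n = ⋂ k : Fin n,
      {u : Fin n → ℝ | 0 ≤ ∑ j ∈ Finset.Iic k, θ ^ (k.1 - j.1) * u j} := by
    ext u; simp [S, Set.mem_iInter]
  rw [this]
  exact MeasurableSet.iInter fun k => measurableSet_le measurable_const (measurable_W θ k)

lemma measurable_V (n : ℕ) : Measurable (V θ n) :=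
  Finset.measurable_sum _ fun j _ => (measurable_pi_apply j).const_mul _

lemma Iic_castSucc {n : ℕ} (k : Fin n) :
    (Finset.Iic (Fin.castSucc k)) = (Finset.Iic k).map Fin.castSuccEmb := by
  ext j
  simp only [Finset.mem_Iic, Finset.mem_map]
  constructor
  · intro hj
    have hj' : j.1 ≤ k.1 := hj
    refine ⟨⟨j.1, lt_of_le_of_lt hj' k.isLt⟩, ?_, ?_⟩
    · exact hj'
    · simp [Fin.castSuccEmb, Fin.ext_iff]
  · rintro ⟨j', hj', rfl⟩
    exact hj'

lemma W_castSucc {n : ℕ} (k : Fin n) (u : Fin (n + 1) → ℝ) :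
    ∑ j ∈ Finset.Iic (Fin.castSucc k), θ ^ ((Fin.castSucc k).1 - j.1) * u j
      = ∑ j ∈ Finset.Iic k, θ ^ (k.1 - j.1) * Fin.init u j := by
  rw [Iic_castSucc, Finset.sum_map]
  rfl

lemma V_succ (n : ℕ) (u : Fin (n + 1) → ℝ) :
    V θ (n + 1) u = θ * V θ n (Fin.init u) + u (Fin.last n) := by
  rw [V, Fin.sum_univ_castSucc]
  simp only [Fin.coe_castSucc, Fin.val_last, Nat.add_sub_cancel, Nat.sub_self, pow_zero, one_mul]
  rw [V, Finset.mul_sum]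
  congr 1
  refine Finset.sum_congr rfl fun j _ => ?_
  have hj : j.1 ≤ n - 1 ∨ n = 0 := by
    rcases Nat.eq_zero_or_pos n with h | h
    · exact Or.inr h
    · exact Or.inl (Nat.le_sub_one_of_lt j.isLt)
  rcases hj with hj | hj
  · have : n - j.1 = (n - 1 - j.1) + 1 := by omega
    rw [this, pow_succ, Fin.init]
    ring
  · exact absurd j.isLt (by omega)

lemma V_last {n : ℕ} (u : Fin (n + 1) → ℝ) :
    ∑ j ∈ Finset.Iic (Fin.last n), θ ^ ((Fin.last n).1 - j.1) * u j = V θ (n + 1) u := by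
  rw [V]
  rw [show Finset.Iic (Fin.last n) = Finset.univ from by ext j; simp [Fin.le_last]]
  refine Finset.sum_congr rfl fun j _ => ?_
  congr 2

lemma mem_S_succ {n : ℕ} (u : Fin (n + 1) → ℝ) :
    u ∈ S θ (n + 1) ↔ Fin.init u ∈ S θ n ∧ 0 ≤ V θ (n + 1) u := by
  constructor
  · intro h
    refine ⟨fun k => ?_, ?_⟩
    · have := h (Fin.castSucc k)
      rwa [W_castSucc] at this
    · have := h (Fin.last n)
      rwa [V_last] at this
  · rintro ⟨h1, h2⟩ k
    refine Fin.lastCases ?_ (fun k => ?_) k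
    · rwa [V_last]
    · rw [W_castSucc]; exact h1 k

lemma V_nonneg {n : ℕ} {v : Fin n → ℝ} (hv : v ∈ S θ n) : 0 ≤ V θ n v := by
  cases n with
  | zero => simp [V]
  | succ m =>
    have := hv (Fin.last m)
    rwa [V_last] at this



lemma int_exp_neg_mul (a : ℝ) {b : ℝ} (hb : 0 < b) :
    ∫ x in Ioi a, exp (-(b * x)) = exp (-(b * a)) / b := by
  have h := integral_comp_mul_left_Ioi (fun x => exp (-x)) a hb
  simp only [smul_eq_mul] at h
  rw [show (fun x => exp (-(b*x))) = fun x => exp (-(b*x)) from rfl]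
  calc ∫ x in Ioi a, exp (-(b * x)) = b⁻¹ * ∫ x in Ioi (b * a), exp (-x) := h
    _ = exp (-(b * a)) / b := by rw [integral_exp_neg_Ioi]; ring

lemma inner_int {a l : ℝ} (ha : 0 ≤ a) (hl : l ≤ 0) :
    ∫⁻ x, ENNReal.ofReal (exp (-|x|) / 2) *
        (Ici a).indicator (fun x => ENNReal.ofReal (exp (l * (x - a)))) x
      = ENNReal.ofReal (exp (-a) * (2 * (1 - l))⁻¹) := by
  have h1l : (0:ℝ) < 1 - l := by linarith
  have key : ∀ x : ℝ, ENNReal.ofReal (exp (-|x|) / 2) *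
        (Ici a).indicator (fun x => ENNReal.ofReal (exp (l * (x - a)))) x
      = (Ici a).indicator (fun x => ENNReal.ofReal (exp (-l * a) / 2 * exp (-((1 - l) * x)))) x := by
    intro x
    by_cases hx : x ∈ Ici a
    · rw [indicator_of_mem hx, indicator_of_mem hx, ← ENNReal.ofReal_mul (by positivity)]
      congr 1
      have hxa : 0 ≤ x := le_trans ha hx
      have h2 : -x + l * (x - a) = -l * a + -((1 - l) * x) := by ring
      rw [abs_of_nonneg hxa, div_mul_eq_mul_div, div_mul_eq_mul_div, ← exp_add, ← exp_add, h2]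
    · rw [indicator_of_notMem hx, indicator_of_notMem hx, mul_zero]
  simp_rw [key]
  rw [lintegral_indicator measurableSet_Ici,
    ← restrict_Ioi_eq_restrict_Ici]
  have hbase : IntegrableOn (fun x : ℝ => exp (-(1 - l) * x)) (Ioi a) :=
    exp_neg_integrableOn_Ioi a h1l
  simp only [neg_mul] at hbase
  have hint : IntegrableOn (fun x => exp (-l * a) / 2 * exp (-((1 - l) * x))) (Ioi a) :=
    hbase.const_mul _
  rw [← ofReal_integral_eq_lintegral_ofReal hint (Filter.Eventually.of_forall fun x => by positivity)]
  rw [MeasureTheory.integral_const_mul, int_exp_neg_mul a h1l]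
  congr 1
  rw [div_mul_div_comm, ← exp_add, show -l * a + -((1 - l) * a) = -a from by ring,
    div_eq_mul_inv, mul_inv]

noncomputable def pl (n : ℕ) : Measure (Fin n → ℝ) := Measure.pi fun _ => laplace

noncomputable def Q (n : ℕ) : ℝ≥0∞ :=
  ∫⁻ v, (S θ n).indicator (fun v => ENNReal.ofReal (exp (θ * V θ n v))) v ∂ pl n

lemma step (hθ : θ ≤ 0) {l : ℝ} (hl : l ≤ 0) (n : ℕ) :
    ∫⁻ u, (S θ (n + 1)).indicator
        (fun u => ENNReal.ofReal (exp (l * V θ (n + 1) u))) u ∂ pl (n + 1)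
      = ENNReal.ofReal (2 * (1 - l))⁻¹ * Q θ n := by
  set F : (Fin (n + 1) → ℝ) → ℝ≥0∞ :=
    (S θ (n + 1)).indicator (fun u => ENNReal.ofReal (exp (l * V θ (n + 1) u))) with hFdef
  have hF : Measurable F :=
    Measurable.indicator (((measurable_V θ (n + 1)).const_mul l).exp.ennreal_ofReal)
      (measurableSet_S θ (n + 1))
  set e := MeasurableEquiv.piFinSuccAbove (fun _ : Fin (n + 1) => ℝ) (Fin.last n) with hedef
  have mp := measurePreserving_piFinSuccAbove (fun _ : Fin (n + 1) => laplace) (Fin.last n)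
  have h1 : ∫⁻ u, F u ∂ pl (n + 1)
      = ∫⁻ z, F (e.symm z) ∂ (laplace.prod (Measure.pi fun _ : Fin n => laplace)) := by
    rw [MeasurePreserving.lintegral_map_equiv (fun z => F (e.symm z)) e mp]
    congr 1; funext u; rw [MeasurableEquiv.symm_apply_apply]
  rw [pl] at h1 ⊢
  rw [h1, lintegral_prod_symm (fun z => F (e.symm z)) ((hF.comp e.symm.measurable).aemeasurable)]
  have h2 : ∀ v : Fin n → ℝ, ∀ x : ℝ, F (e.symm (x, v)) = F (Fin.snoc v x) := by
    intro v x
    congr 1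
    simp [hedef, MeasurableEquiv.piFinSuccAbove, Fin.insertNth_last', Fin.snocEquiv]
  have h3 : ∀ v : Fin n → ℝ, (∫⁻ x, F (Fin.snoc v x) ∂laplace)
      = (S θ n).indicator (fun v => ENNReal.ofReal (exp (θ * V θ n v))) v
          * ENNReal.ofReal (2 * (1 - l))⁻¹ := by
    intro v
    by_cases hv : v ∈ S θ n
    · set a : ℝ := -(θ * V θ n v) with hadef
      have ha : 0 ≤ a := by
        have := V_nonneg θ hv
        have : θ * V θ n v ≤ 0 := mul_nonpos_of_nonpos_of_nonneg hθ this
        simpa [hadef] using this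
      have hFs : ∀ x : ℝ, F (Fin.snoc v x)
          = (Ici a).indicator (fun x => ENNReal.ofReal (exp (l * (x - a)))) x := by
        intro x
        have hmem : Fin.snoc v x ∈ S θ (n + 1) ↔ a ≤ x := by
          rw [mem_S_succ, V_succ]
          simp only [Fin.init_snoc, Fin.snoc_last]
          constructor
          · rintro ⟨-, h⟩; rw [hadef]; linarith
          · intro h; exact ⟨hv, by rw [hadef] at h; linarith⟩
        by_cases hx : x ∈ Ici a
        · rw [hFdef, indicator_of_mem (hmem.mpr hx), indicator_of_mem hx]
          congr 2
          rw [V_succ]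
          simp only [Fin.init_snoc, Fin.snoc_last]
          rw [hadef]; ring
        · rw [hFdef, indicator_of_notMem (fun h => hx (hmem.mp h)), indicator_of_notMem hx]
          
      simp_rw [hFs]
      have hf : Measurable fun x : ℝ => ENNReal.ofReal (exp (-|x|) / 2) := by measurability
      have hg : Measurable ((Ici a).indicator fun x => ENNReal.ofReal (exp (l * (x - a)))) :=
        Measurable.indicator (by measurability) measurableSet_Ici
      rw [show laplace = volume.withDensity fun x => ENNReal.ofReal (Real.exp (-|x|) / 2) from rfl,
        lintegral_withDensity_eq_lintegral_mul _ hf hg]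
      simp only [Pi.mul_apply]
      rw [inner_int ha hl, indicator_of_mem hv, hadef, neg_neg,
        ENNReal.ofReal_mul (exp_pos _).le]
    · have hFs : ∀ x : ℝ, F (Fin.snoc v x) = 0 := by
        intro x
        rw [hFdef, indicator_of_notMem]
        rw [mem_S_succ]
        simp only [Fin.init_snoc]
        tauto
      simp_rw [hFs]
      rw [lintegral_zero, indicator_of_notMem hv, zero_mul]
  calc ∫⁻ v, ∫⁻ x, F (e.symm (x, v)) ∂laplace ∂(Measure.pi fun _ : Fin n => laplace)
      = ∫⁻ v, (S θ n).indicator (fun v => ENNReal.ofReal (exp (θ * V θ n v))) v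
          * ENNReal.ofReal (2 * (1 - l))⁻¹ ∂(Measure.pi fun _ : Fin n => laplace) := by
        refine lintegral_congr fun v => ?_
        simp_rw [h2 v]
        exact h3 v
    _ = ENNReal.ofReal (2 * (1 - l))⁻¹ * Q θ n := by
        have hm : Measurable ((S θ n).indicator
            fun v : Fin n → ℝ => ENNReal.ofReal (exp (θ * V θ n v))) :=
          Measurable.indicator (((measurable_V θ n).const_mul θ).exp.ennreal_ofReal)
            (measurableSet_S θ n)
        rw [lintegral_mul_const _ hm, mul_comm]
        rfl


variable (θ : ℝ)

lemma Q_zero : Q θ 0 = 1 := by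
  rw [Q]
  have h : ∀ v : Fin 0 → ℝ,
      (S θ 0).indicator (fun v => ENNReal.ofReal (exp (θ * V θ 0 v))) v = 1 := by
    intro v
    rw [indicator_of_mem (show v ∈ S θ 0 from fun k => k.elim0)]
    simp [V]
  simp_rw [h]
  rw [lintegral_one]
  simp [pl]

lemma Q_eq (hθ : θ ≤ 0) (n : ℕ) :
    Q θ n = ENNReal.ofReal ((2 * (1 - θ))⁻¹ ^ n) := by
  induction n with
  | zero => simp [Q_zero]
  | succ m ih =>
    have h := step θ hθ hθ m
    rw [show (∫⁻ u, (S θ (m + 1)).indicator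
        (fun u => ENNReal.ofReal (exp (θ * V θ (m + 1) u))) u ∂ pl (m + 1)) = Q θ (m + 1) from rfl]
      at h
    rw [h, ih, ← ENNReal.ofReal_mul (inv_nonneg.mpr (by linarith : (0:ℝ) ≤ 2 * (1 - θ))), pow_succ]
    ring_nf

lemma P_succ (hθ : θ ≤ 0) (n : ℕ) :
    pl (n + 1) (S θ (n + 1)) = ENNReal.ofReal (2⁻¹ * (2 * (1 - θ))⁻¹ ^ n) := by
  have h := step θ hθ (le_refl (0:ℝ)) n
  have h0 : ∀ u : Fin (n + 1) → ℝ,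
      (S θ (n + 1)).indicator (fun u => ENNReal.ofReal (exp ((0:ℝ) * V θ (n + 1) u))) u
        = (S θ (n + 1)).indicator 1 u := by
    intro u
    by_cases hu : u ∈ S θ (n + 1)
    · rw [indicator_of_mem hu, indicator_of_mem hu]; simp
    · rw [indicator_of_notMem hu, indicator_of_notMem hu]
  simp_rw [h0] at h
  rw [lintegral_indicator_one (measurableSet_S θ (n + 1))] at h
  rw [h, Q_eq θ hθ, ← ENNReal.ofReal_mul (by norm_num)]
  norm_num

end PersistAux

theorem persistence_biexponential_neg_drift (θ : ℝ) (hθ : θ ≤ 0) (n : ℕ) (hn : 1 ≤ n) :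
    2 ^ n * persist laplace θ n = ((1 - θ) ^ (n - 1))⁻¹ := by
  obtain ⟨m, rfl⟩ : ∃ m, n = m + 1 := ⟨n - 1, (Nat.succ_pred_eq_of_pos hn).symm⟩
  have h1θ : (0:ℝ) < 1 - θ := by linarith
  have hpos : (0:ℝ) ≤ 2⁻¹ * (2 * (1 - θ))⁻¹ ^ m := by positivity
  have hP : persist laplace θ (m + 1) = 2⁻¹ * (2 * (1 - θ))⁻¹ ^ m := by
    rw [persist]
    rw [show ((Measure.pi fun _ : Fin (m+1) => laplace)
        {u | ∀ k : Fin (m+1), 0 ≤ ∑ j ∈ Finset.Iic k, θ ^ (k.1 - j.1) * u j})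
      = PersistAux.pl (m+1) (PersistAux.S θ (m+1)) from rfl]
    rw [PersistAux.P_succ θ hθ m, ENNReal.toReal_ofReal hpos]
  rw [hP, Nat.add_sub_cancel]
  have h2 : (2:ℝ) ≠ 0 := two_ne_zero
  have h1θ' : (1:ℝ) - θ ≠ 0 := ne_of_gt h1θ
  rw [mul_inv, mul_pow, inv_pow, inv_pow]
  field_simp
  ring
end
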